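/- arXiv:1202.3945 — 6 statements merged into one kernel-verified Lean document; each statement's English description precedes it below -/
import Mathlib

section
/- Let R be a generalized Yang-Baxter operator of type (d,k,m) on a d-dimensional complex vector space V, let μ be an endomorphism of V, let α, β be nonzero complex numbers, fix n ≥ 2, and set N = k+m(n−2). Suppose that for every ξ ∈ B_n one has tr(ρ^R_n(ξ) ∘ [μ^{⊗m(n−1)} ⊗ (Sp_{k,m}(R ∘ μ^{⊗k}) − αβ μ^{⊗(k−m)})]) = 0. Then for every ξ ∈ B_n, tr(ρ^R_{n+1}(ι(ξ)·σ_n) ∘ μ^{⊗(N+m)}) = αβ · tr(ρ^R_n(ξ) ∘ μ^{⊗N}), where ι : B_n → B_{n+1} is the natural inclusion sending σ_i to σ_i. Likewise, if for every ξ ∈ B_n one has tr(ρ^R_n(ξ) ∘ [μ^{⊗m(n−1)} ⊗ (Sp_{k,m}(R^{−1} ∘ μ^{⊗k}) − α^{−1}β μ^{⊗(k−m)})]) = 0, then tr(ρ^R_{n+1}(ι(ξ)·σ_n^{−1}) ∘ μ^{⊗(N+m)}) = α^{−1}β · tr(ρ^R_n(ξ) ∘ μ^{⊗N}) for every ξ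 ∈ B_n. -/
open scoped BigOperators
open Matrix

/-- Endomorphisms of `V^{⊗n}`, `dim V = d`, as multi-indexed matrices. -/
abbrev MIM (d n : ℕ) := Matrix (Fin n → Fin d) (Fin n → Fin d) ℂ

/-- Kronecker (tensor) product of multi-indexed matrices. -/
noncomputable def mtens {d a b : ℕ} (f : MIM d a) (g : MIM d b) : MIM d (a + b) :=
  fun i j =>
    f (fun x => i (Fin.castAdd b x)) (fun x => j (Fin.castAdd b x)) *
    g (fun x => i (Fin.natAdd a x)) (fun x => j (Fin.natAdd a x))

/-- Partial operator trace `Sp_{p+m,m}` over the last `m` tensor factors. -/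
noncomputable def pTr {d : ℕ} (p m : ℕ) (f : MIM d (p + m)) : MIM d p :=
  fun i j => ∑ l : Fin m → Fin d, f (Fin.append i l) (Fin.append j l)

/-- Kronecker power `μ^{⊗ n}`. -/
noncomputable def mpow {d : ℕ} (μ : Matrix (Fin d) (Fin d) ℂ) (n : ℕ) : MIM d n :=
  fun i j => ∏ x : Fin n, μ (i x) (j x)

/-- Transport a multi-indexed matrix along an equality of the number of factors. -/
noncomputable def recast {d a b : ℕ} (h : a = b) (f : MIM d a) : MIM d b :=
  Matrix.reindex (Equiv.arrowCongr (finCongr h) (Equiv.refl (Fin d)))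
    (Equiv.arrowCongr (finCongr h) (Equiv.refl (Fin d))) f

/-- `R_i = I_m^{⊗(i-1)} ⊗ R ⊗ I_m^{⊗(n-i-1)}` acting on `V^{⊗(k+m(n-2))}`
(zero-based index `i : Fin (n-1)`). -/
noncomputable def Rop (d k m n : ℕ) (R : MIM d k) (i : Fin (n - 1)) : MIM d (k + m * (n - 2)) :=
  fun a b =>
    if ∀ x : Fin (k + m * (n - 2)),
        ((x : ℕ) < m * (i : ℕ) ∨ m * (i : ℕ) + k ≤ (x : ℕ)) → a x = b x then
      R (fun y => a ⟨m * (i : ℕ) + (y : ℕ), by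
            have h1 : (i : ℕ) < n - 1 := i.isLt
            have h2 : m * (i : ℕ) ≤ m * (n - 2) := Nat.mul_le_mul_left m (by omega)
            have h3 := y.isLt
            omega⟩)
        (fun y => b ⟨m * (i : ℕ) + (y : ℕ), by
            have h1 : (i : ℕ) < n - 1 := i.isLt
            have h2 : m * (i : ℕ) ≤ m * (n - 2) := Nat.mul_le_mul_left m (by omega)
            have h3 := y.isLt
            omega⟩)
    else 0

/-- `R` is a generalized Yang–Baxter operator of type `(d,k,m)`. -/
def IsGYB (d k m : ℕ) (R : MIM d k) : Prop :=
  IsUnit R ∧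
  (Rop d k m 3 R 0 * Rop d k m 3 R 1 * Rop d k m 3 R 0 =
      Rop d k m 3 R 1 * Rop d k m 3 R 0 * Rop d k m 3 R 1) ∧
  ∀ j : ℕ, (hj : 4 ≤ j) →
    Rop d k m j R ⟨0, by omega⟩ * Rop d k m j R ⟨j - 2, by omega⟩ =
      Rop d k m j R ⟨j - 2, by omega⟩ * Rop d k m j R ⟨0, by omega⟩

/-- Defining relations of the braid group `B_n` (zero-based generators). -/
def braidRels (n : ℕ) : Set (FreeGroup (Fin (n - 1))) :=
  { r | (∃ i j : Fin (n - 1), (i : ℕ) + 2 ≤ (j : ℕ) ∧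
          r = FreeGroup.of i * FreeGroup.of j * (FreeGroup.of i)⁻¹ * (FreeGroup.of j)⁻¹) ∨
        (∃ i j : Fin (n - 1), (j : ℕ) = (i : ℕ) + 1 ∧
          r = FreeGroup.of i * FreeGroup.of j * FreeGroup.of i *
              (FreeGroup.of j * FreeGroup.of i * FreeGroup.of j)⁻¹) }

/-- The braid group `B_n` as a presented group. -/
abbrev BraidGroup (n : ℕ) := PresentedGroup (braidRels n)

section Helpers
variable {d : ℕ}

lemma recast_rfl {a : ℕ} (f : MIM d a) : recast rfl f = f := by
  simp [recast]

lemma recast_recast {a b c : ℕ} (h : a = b) (h' : b = c) (f : MIM d a) :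
    recast h' (recast h f) = recast (h.trans h') f := by
  subst h; subst h'; simp [recast_rfl]

lemma recast_mul {a b : ℕ} (h : a = b) (f g : MIM d a) :
    recast h (f * g) = recast h f * recast h g := by
  subst h; simp [recast_rfl]

lemma recast_one {a b : ℕ} (h : a = b) : recast h (1 : MIM d a) = 1 := by
  subst h; simp [recast_rfl]

lemma trace_recast {a b : ℕ} (h : a = b) (f : MIM d a) :
    Matrix.trace (recast h f) = Matrix.trace f := by
  subst h; simp [recast_rfl]

lemma recast_mpow {a b : ℕ} (h : a = b) (μ : Matrix (Fin d) (Fin d) ℂ) :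
    recast h (mpow μ a) = mpow μ b := by
  subst h; simp [recast_rfl]

lemma recast_sub {a b : ℕ} (h : a = b) (f g : MIM d a) :
    recast h (f - g) = recast h f - recast h g := by
  subst h; simp [recast_rfl]

lemma recast_smul {a b : ℕ} (h : a = b) (c : ℂ) (f : MIM d a) :
    recast h (c • f) = c • recast h f := by
  subst h; simp [recast_rfl]

lemma recast_apply {a b : ℕ} (h : a = b) (f : MIM d a) (i j : Fin b → Fin d) :
    recast h f i j = f (fun t => i (finCongr h t)) (fun t => j (finCongr h t)) := rfl

lemma sum_append {a b : ℕ} {M : Type*} [AddCommMonoid M] (F : (Fin (a + b) → Fin d) → M) :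
    ∑ x, F x = ∑ u : Fin a → Fin d, ∑ v : Fin b → Fin d, F (Fin.append u v) := by
  rw [← (Fintype.sum_equiv (Fin.appendEquiv a b) _ F (fun x => rfl))]
  rw [Fintype.sum_prod_type]
  rfl

lemma mtens_append {a b : ℕ} (f : MIM d a) (g : MIM d b)
    (u u' : Fin a → Fin d) (v v' : Fin b → Fin d) :
    mtens f g (Fin.append u v) (Fin.append u' v') = f u u' * g v v' := by
  simp [mtens, Fin.append_left, Fin.append_right]

lemma trace_eq_sum_mul {N : Type*} [Fintype N] [DecidableEq N] (M P : Matrix N N ℂ) :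
    Matrix.trace (M * P) = ∑ x, ∑ y, M x y * P y x := by
  simp [Matrix.trace, Matrix.mul_apply, Matrix.diag]

end Helpers
section Helpers2
variable {d : ℕ}

lemma mtens_mul {a b : ℕ} (f₁ f₂ : MIM d a) (g₁ g₂ : MIM d b) :
    mtens f₁ g₁ * mtens f₂ g₂ = mtens (f₁ * f₂) (g₁ * g₂) := by
  funext i j
  rw [Matrix.mul_apply, sum_append]
  simp only [mtens, Matrix.mul_apply, Fin.append_left, Fin.append_right]
  rw [Finset.sum_mul_sum]
  apply Finset.sum_congr rfl; intro u _
  apply Finset.sum_congr rfl; intro v _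
  ring

lemma mtens_one_one {a b : ℕ} : mtens (1 : MIM d a) (1 : MIM d b) = 1 := by
  funext i j
  simp only [mtens, Matrix.one_apply]
  by_cases h : i = j
  · subst h; simp
  · have : ¬((fun x => i (Fin.castAdd b x)) = (fun x => j (Fin.castAdd b x)) ∧
        (fun x => i (Fin.natAdd a x)) = (fun x => j (Fin.natAdd a x))) := by
      intro ⟨h1, h2⟩
      apply h; funext x
      induction x using Fin.addCases with
      | left x => exact congrFun h1 x
      | right x => exact congrFun h2 x
    rcases not_and_or.mp this with h' | h' <;> simp [h', if_neg h]

lemma mtens_mpow {a b : ℕ} (μ : Matrix (Fin d) (Fin d) ℂ) :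
    mtens (mpow μ a) (mpow μ b) = mpow μ (a + b) := by
  funext i j
  simp [mtens, mpow, Fin.prod_univ_add]

lemma mtens_sub {a b : ℕ} (f : MIM d a) (g h : MIM d b) :
    mtens f (g - h) = mtens f g - mtens f h := by
  funext i j; simp [mtens]; ring

lemma mtens_smul {a b : ℕ} (f : MIM d a) (c : ℂ) (g : MIM d b) :
    mtens f (c • g) = c • mtens f g := by
  funext i j; simp [mtens]; ring

end Helpers2
section Helpers3
variable {d : ℕ}

lemma append_cast_assoc {q p m : ℕ} (u : Fin q → Fin d) (v : Fin p → Fin d) (l : Fin m → Fin d) :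
    (fun t : Fin (q + (p + m)) =>
        Fin.append (Fin.append u v) l (finCongr (add_assoc q p m).symm t)) =
      Fin.append u (Fin.append v l) := by
  funext t
  rw [Fin.append_assoc]
  simp

lemma core_trace {q p m : ℕ} (A : MIM d (q + p)) (S : MIM d (p + m))
    (μ : Matrix (Fin d) (Fin d) ℂ) :
    Matrix.trace (mtens A (1 : MIM d m) * recast (add_assoc q p m).symm (mtens (mpow μ q) S)) =
      Matrix.trace (A * mtens (mpow μ q) (pTr p m S)) := by
  rw [trace_eq_sum_mul, trace_eq_sum_mul]
  simp only [sum_append, recast_apply, append_cast_assoc, mtens_append]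
  simp only [Matrix.one_apply, mul_ite, ite_mul, mul_zero, zero_mul, mul_one, one_mul,
    Finset.sum_ite_eq, Finset.mem_univ, if_true]
  simp only [pTr, Finset.mul_sum]
  apply Finset.sum_congr rfl; intro u _
  apply Finset.sum_congr rfl; intro v _
  rw [Finset.sum_comm]
  apply Finset.sum_congr rfl; intro u' _
  rw [Finset.sum_comm]

end Helpers3
section Helpers4
variable {d : ℕ}

lemma rop_last {k m n : ℕ} (hn : 2 ≤ n) (R : MIM d k) :
    Rop d k m (n + 1) R ⟨n - 1, by omega⟩ =
      recast (show m * (n - 1) + k = k + m * (n + 1 - 2) by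
        rw [show n + 1 - 2 = n - 1 from rfl]; exact Nat.add_comm _ _)
        (mtens (1 : MIM d (m * (n - 1))) R) := by
  set q := m * (n - 1) with hq
  funext a b
  simp only [Rop, recast_apply, mtens]
  set f₁ : Fin q → Fin d := fun t =>
    a (finCongr (show q + k = k + m * (n + 1 - 2) by rw [show n + 1 - 2 = n - 1 from rfl]; exact Nat.add_comm _ _) (Fin.castAdd k t)) with hf₁
  set f₂ : Fin q → Fin d := fun t =>
    b (finCongr (show q + k = k + m * (n + 1 - 2) by rw [show n + 1 - 2 = n - 1 from rfl]; exact Nat.add_comm _ _) (Fin.castAdd k t)) with hf₂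
  have hcond : (∀ x : Fin (k + m * (n + 1 - 2)),
      ((x : ℕ) < m * ((⟨n - 1, by omega⟩ : Fin (n + 1 - 1)) : ℕ) ∨
        m * ((⟨n - 1, by omega⟩ : Fin (n + 1 - 1)) : ℕ) + k ≤ (x : ℕ)) → a x = b x) ↔ f₁ = f₂ := by
    constructor
    · intro hC
      funext t
      exact hC _ (Or.inl t.isLt)
    · intro hf x hx
      rcases hx with hlt | hge
      · have := congrFun hf ⟨(x : ℕ), hlt⟩
        simpa only [hf₁, hf₂] using
          (by convert this using 2 <;> exact (Fin.ext rfl : x = _) :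
            a x = b x)
      · exfalso
        have hge' : m * (n - 1) + k ≤ (x : ℕ) := hge
        have hlt' : (x : ℕ) < k + m * (n - 1) := x.isLt
        omega
  by_cases hC : (∀ x : Fin (k + m * (n + 1 - 2)),
      ((x : ℕ) < m * ((⟨n - 1, by omega⟩ : Fin (n + 1 - 1)) : ℕ) ∨
        m * ((⟨n - 1, by omega⟩ : Fin (n + 1 - 1)) : ℕ) + k ≤ (x : ℕ)) → a x = b x)
  · rw [if_pos hC]
    have h12 : f₁ = f₂ := hcond.mp hC
    rw [← h12, Matrix.one_apply_eq, one_mul]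
    congr 1 <;> · funext y; congr 1; exact Fin.ext rfl
  · rw [if_neg hC]
    have h12 : f₁ ≠ f₂ := fun h => hC (hcond.mpr h)
    rw [Matrix.one_apply_ne h12, zero_mul]

end Helpers4
section Helpers5
variable {d : ℕ}

lemma rop_cast {k m n : ℕ} (hn : 2 ≤ n) (R : MIM d k) (i : Fin (n - 1)) :
    Rop d k m (n + 1) R (Fin.castLE (by omega) i) =
      recast (show (k + m * (n - 2)) + m = k + m * (n + 1 - 2) by
        rw [show n + 1 - 2 = n - 1 from rfl, show n - 1 = (n - 2) + 1 by omega,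
          Nat.mul_add, Nat.mul_one, Nat.add_assoc])
        (mtens (Rop d k m n R i) (1 : MIM d m)) := by
  have hNe : (k + m * (n - 2)) + m = k + m * (n + 1 - 2) := by
    rw [show n + 1 - 2 = n - 1 from rfl, show n - 1 = (n - 2) + 1 by omega,
      Nat.mul_add, Nat.mul_one, Nat.add_assoc]
  have hile : m * (i : ℕ) ≤ m * (n - 2) := Nat.mul_le_mul_left m (by have := i.isLt; omega)
  funext a b
  simp only [Rop, recast_apply, mtens, Fin.coe_castLE]
  set N' := k + m * (n - 2) with hN'
  set fA : Fin N' → Fin d := fun t => a (finCongr hNe (Fin.castAdd m t)) with hfA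
  set fB : Fin N' → Fin d := fun t => b (finCongr hNe (Fin.castAdd m t)) with hfB
  set lA : Fin m → Fin d := fun y => a (finCongr hNe (Fin.natAdd N' y)) with hlA
  set lB : Fin m → Fin d := fun y => b (finCongr hNe (Fin.natAdd N' y)) with hlB
  have hcond : (∀ x : Fin (k + m * (n + 1 - 2)),
      ((x : ℕ) < m * (i : ℕ) ∨ m * (i : ℕ) + k ≤ (x : ℕ)) → a x = b x) ↔
      ((∀ x : Fin N', ((x : ℕ) < m * (i : ℕ) ∨ m * (i : ℕ) + k ≤ (x : ℕ)) → fA x = fB x) ∧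
        lA = lB) := by
    constructor
    · intro hC
      refine ⟨fun x hx => ?_, funext fun y => ?_⟩
      · exact hC (finCongr hNe (Fin.castAdd m x)) hx
      · exact hC (finCongr hNe (Fin.natAdd N' y)) (Or.inr (by
          show m * (i : ℕ) + k ≤ N' + (y : ℕ)
          omega))
    · rintro ⟨hC', hl⟩ x hx
      by_cases hxN : (x : ℕ) < N'
      · have := hC' ⟨(x : ℕ), hxN⟩ hx
        have hidx : finCongr hNe (Fin.castAdd m (⟨(x : ℕ), hxN⟩ : Fin N')) = x :=
          Fin.ext rfl
        rw [← hidx]; exact this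
      · have hym : (x : ℕ) - N' < m := by
          have := x.isLt
          have hx2 : (x : ℕ) < N' + m := by omega
          omega
        have := congrFun hl ⟨(x : ℕ) - N', hym⟩
        have hidx : finCongr hNe (Fin.natAdd N' (⟨(x : ℕ) - N', hym⟩ : Fin m)) = x :=
          Fin.ext (by show N' + ((x : ℕ) - N') = (x : ℕ); omega)
        rw [← hidx]; exact this
  have hx2 : ∀ x : Fin (k + m * (n + 1 - 2)), ((x : ℕ) < k + m * (n - 1)) := fun x => x.isLt
  by_cases hC : (∀ x : Fin (k + m * (n + 1 - 2)),
      ((x : ℕ) < m * (i : ℕ) ∨ m * (i : ℕ) + k ≤ (x : ℕ)) → a x = b x)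
  · rw [if_pos hC]
    obtain ⟨hC', hl⟩ := hcond.mp hC
    rw [if_pos hC', ← hl, Matrix.one_apply_eq, mul_one]
    congr 1 <;> · funext y; congr 1; exact Fin.ext rfl
  · rw [if_neg hC]
    rcases not_and_or.mp (fun h => hC (hcond.mpr h) : ¬_) with h' | h'
    · rw [if_neg h', zero_mul]
    · rw [Matrix.one_apply_ne h', mul_zero]

end Helpers5
section Helpers6
variable {d : ℕ}

lemma recast_add {a b : ℕ} (h : a = b) (f g : MIM d a) :
    recast h (f + g) = recast h f + recast h g := by
  subst h; simp [recast_rfl]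

lemma mtens_recast_left {a b c : ℕ} (h : a = b) (h2 : a + c = b + c)
    (f : MIM d a) (g : MIM d c) :
    mtens (recast h f) g = recast h2 (mtens f g) := by
  subst h; rw [recast_rfl]; exact (recast_rfl _).symm

lemma key_step {p m n : ℕ} (hn : 2 ≤ n) (μ : Matrix (Fin d) (Fin d) ℂ)
    (X : MIM d (p + m)) (c : ℂ) (A : MIM d ((p + m) + m * (n - 2)))
    (hA : m * (n - 1) + p = (p + m) + m * (n - 2))
    (hc : ((p + m) + m * (n - 2)) + m = (p + m) + m * (n + 1 - 2))
    (hq : m * (n - 1) + (p + m) = (p + m) + m * (n + 1 - 2))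
    (hz : Matrix.trace (A * recast hA (mtens (mpow μ (m * (n - 1)))
        (pTr p m (X * mpow μ (p + m)) - c • mpow μ p))) = 0) :
    Matrix.trace (recast hc (mtens A (1 : MIM d m)) *
        (recast hq (mtens (1 : MIM d (m * (n - 1))) X) * mpow μ ((p + m) + m * (n + 1 - 2)))) =
      c * Matrix.trace (A * mpow μ ((p + m) + m * (n - 2))) := by
  set q := m * (n - 1) with hqdef
  set S := X * mpow μ (p + m) with hSdef
  have e : (q + p) + m = (p + m) + m * (n + 1 - 2) := by rw [hA]; exact hc
  set A' : MIM d (q + p) := recast hA.symm A with hA'def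
  have hAA : A = recast hA A' := by
    rw [hA'def, recast_recast]; exact (recast_rfl A).symm
  have e1 : recast hq (mtens (1 : MIM d q) X) * mpow μ ((p + m) + m * (n + 1 - 2)) =
      recast hq (mtens (mpow μ q) S) := by
    rw [← recast_mpow hq μ, ← mtens_mpow, ← recast_mul, mtens_mul, one_mul]
  have e2 : recast hc (mtens A (1 : MIM d m)) = recast e (mtens A' (1 : MIM d m)) := by
    conv_lhs => rw [hAA]
    rw [mtens_recast_left hA (by rw [hA]), recast_recast]
  have e3 : recast hq (mtens (mpow μ q) S) =
      recast e (recast (add_assoc q p m).symm (mtens (mpow μ q) S)) := by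
    rw [recast_recast]
  have main : Matrix.trace (recast hc (mtens A (1 : MIM d m)) *
      (recast hq (mtens (1 : MIM d q) X) * mpow μ ((p + m) + m * (n + 1 - 2)))) =
      Matrix.trace (A * recast hA (mtens (mpow μ q) (pTr p m S))) := by
    rw [e1, e2, e3, ← recast_mul, trace_recast, core_trace]
    conv_rhs => rw [hAA]
    rw [← recast_mul, trace_recast]
  rw [main]
  have hsplit : mtens (mpow μ q) (pTr p m S) =
      mtens (mpow μ q) (pTr p m S - c • mpow μ p) + c • mpow μ (q + p) := by
    rw [mtens_sub, mtens_smul, mtens_mpow, sub_add_cancel]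
  rw [hsplit, recast_add, recast_smul, Matrix.mul_add, Matrix.trace_add, hz, zero_add,
    recast_mpow, Matrix.mul_smul, Matrix.trace_smul, smul_eq_mul]

end Helpers6
theorem stmt7 (d p m n : ℕ) (hd : 0 < d) (hp : 0 < p) (hm : 0 < m) (hn : 2 ≤ n)
    (R : MIM d (p + m)) (hR : IsGYB d (p + m) m R)
    (μ : Matrix (Fin d) (Fin d) ℂ) (α β : ℂ) (hα : α ≠ 0) (hβ : β ≠ 0)
    (ρn : BraidGroup n →* (MIM d ((p + m) + m * (n - 2)))ˣ)
    (hρn : ∀ i : Fin (n - 1), (ρn (PresentedGroup.of i)).val = Rop d (p + m) m n R i)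
    (ρn1 : BraidGroup (n + 1) →* (MIM d ((p + m) + m * (n + 1 - 2)))ˣ)
    (hρn1 : ∀ i : Fin (n + 1 - 1),
      (ρn1 (PresentedGroup.of i)).val = Rop d (p + m) m (n + 1) R i)
    (ι : BraidGroup n →* BraidGroup (n + 1))
    (hι : ∀ i : Fin (n - 1),
      ι (PresentedGroup.of i) = PresentedGroup.of (Fin.castLE (by omega) i)) :
    ((∀ ξ : BraidGroup n,
        Matrix.trace ((ρn ξ).val * recast (show m * (n - 1) + p = (p + m) + m * (n - 2) by
          rw [show n - 1 = (n - 2) + 1 from by omega, Nat.mul_add, Nat.mul_one]; ring) (mtens (mpow μ (m * (n - 1)))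
          (pTr p m (R * mpow μ (p + m)) - (α * β) • mpow μ p))) = 0) →
      ∀ ξ : BraidGroup n,
        Matrix.trace
            ((ρn1 (ι ξ * PresentedGroup.of (⟨n - 1, by omega⟩ : Fin (n + 1 - 1)))).val *
              mpow μ ((p + m) + m * (n + 1 - 2))) =
          α * β * Matrix.trace ((ρn ξ).val * mpow μ ((p + m) + m * (n - 2)))) ∧
    ((∀ ξ : BraidGroup n,
        Matrix.trace ((ρn ξ).val * recast (show m * (n - 1) + p = (p + m) + m * (n - 2) by
          rw [show n - 1 = (n - 2) + 1 from by omega, Nat.mul_add, Nat.mul_one]; ring) (mtens (mpow μ (m * (n - 1)))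
          (pTr p m (R⁻¹ * mpow μ (p + m)) - (α⁻¹ * β) • mpow μ p))) = 0) →
      ∀ ξ : BraidGroup n,
        Matrix.trace
            ((ρn1 (ι ξ * (PresentedGroup.of (⟨n - 1, by omega⟩ : Fin (n + 1 - 1)))⁻¹)).val *
              mpow μ ((p + m) + m * (n + 1 - 2))) =
          α⁻¹ * β * Matrix.trace ((ρn ξ).val * mpow μ ((p + m) + m * (n - 2)))) := by
  have hc : ((p + m) + m * (n - 2)) + m = (p + m) + m * (n + 1 - 2) := by
    rw [show n + 1 - 2 = n - 1 from rfl, show n - 1 = (n - 2) + 1 by omega,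
      Nat.mul_add, Nat.mul_one, Nat.add_assoc]
  have hq : m * (n - 1) + (p + m) = (p + m) + m * (n + 1 - 2) := by
    rw [show n + 1 - 2 = n - 1 from rfl]; exact Nat.add_comm _ _
  have hA : m * (n - 1) + p = (p + m) + m * (n - 2) := by
    rw [show n - 1 = (n - 2) + 1 by omega, Nat.mul_add, Nat.mul_one]; ring
  let φ : MIM d ((p + m) + m * (n - 2)) →* MIM d ((p + m) + m * (n + 1 - 2)) :=
    { toFun := fun A => recast hc (mtens A (1 : MIM d m)),
      map_one' := by
        show recast hc (mtens (1 : MIM d ((p + m) + m * (n - 2))) (1 : MIM d m)) = 1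
        rw [mtens_one_one, recast_one],
      map_mul' := fun A B => by
        show recast hc (mtens (A * B) (1 : MIM d m)) =
          recast hc (mtens A (1 : MIM d m)) * recast hc (mtens B (1 : MIM d m))
        rw [show mtens (A * B) (1 : MIM d m) = mtens A 1 * mtens B 1 by
          rw [mtens_mul, one_mul], recast_mul] }
  have hext : ∀ ξ : BraidGroup n,
      (ρn1 (ι ξ)).val = recast hc (mtens ((ρn ξ).val) (1 : MIM d m)) := by
    have hcomp : ρn1.comp ι = (Units.map φ).comp ρn := by
      apply PresentedGroup.ext
      intro i
      apply Units.ext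
      show (ρn1 (ι (PresentedGroup.of i))).val = ((Units.map φ) (ρn (PresentedGroup.of i))).val
      rw [hι i, hρn1, Units.coe_map]
      show _ = φ ((ρn (PresentedGroup.of i)).val)
      rw [hρn i]
      exact rop_cast hn R i
    intro ξ
    have h2 := DFunLike.congr_fun hcomp ξ
    have h3 := congrArg Units.val h2
    exact h3
  have hlast : (ρn1 (PresentedGroup.of (⟨n - 1, by omega⟩ : Fin (n + 1 - 1)))).val =
      recast hq (mtens (1 : MIM d (m * (n - 1))) R) := by
    rw [hρn1]; exact rop_last hn R
  have hRdet : IsUnit R.det := (Matrix.isUnit_iff_isUnit_det R).mp hR.1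
  have hRRinv : R * R⁻¹ = 1 := Matrix.mul_nonsing_inv R hRdet
  have hlastinv : ((ρn1 (PresentedGroup.of (⟨n - 1, by omega⟩ : Fin (n + 1 - 1))))⁻¹).val =
      recast hq (mtens (1 : MIM d (m * (n - 1))) R⁻¹) := by
    set u := ρn1 (PresentedGroup.of (⟨n - 1, by omega⟩ : Fin (n + 1 - 1))) with hu
    have h1 : u.val * recast hq (mtens (1 : MIM d (m * (n - 1))) R⁻¹) = 1 := by
      rw [hlast, ← recast_mul, mtens_mul, one_mul, hRRinv, mtens_one_one, recast_one]
    calc (u⁻¹).val = (u⁻¹).val * (u.val * recast hq (mtens (1 : MIM d (m * (n - 1))) R⁻¹)) := by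
          rw [h1, mul_one]
      _ = recast hq (mtens (1 : MIM d (m * (n - 1))) R⁻¹) := by
          rw [← mul_assoc, Units.inv_mul, one_mul]
  constructor
  · intro hhyp ξ
    rw [_root_.map_mul ρn1, Units.val_mul, hext ξ, hlast, mul_assoc]
    exact key_step hn μ R (α * β) (ρn ξ).val hA hc hq (hhyp ξ)
  · intro hhyp ξ
    rw [_root_.map_mul ρn1, map_inv ρn1, Units.val_mul, hext ξ, hlastinv, mul_assoc]
    exact key_step hn μ R⁻¹ (α⁻¹ * β) (ρn ξ).val hA hc hq (hhyp ξ)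
end

section
/- Let R be a generalized Yang-Baxter operator of type (d,k,m) on a d-dimensional complex vector space V and let μ be an endomorphism of V. Let n₁, n₂ ≥ 2, let l ≥ 0 satisfy m(l+2) ≥ k, and set n = n₁+n₂. Let ξ₁ ∈ B_{n₁} and ξ₂ ∈ B_{n₂}, and let ξ₁ * 1_l * ξ₂ ∈ B_{n+l} denote the juxtaposed braid, i.e., the image of (ξ₁,ξ₂) under the homomorphism B_{n₁} × B_{n₂} → B_{n+l} sending σ_i (of B_{n₁}) to σ_i and σ_j (of B_{n₂}) to σ_{n₁+l+j}. Then tr(ρ^R_{n+l}(ξ₁ * 1_l * ξ₂) ∘ μ^{⊗(k+m(n+l−2))}) = tr(μ)^{m(l+2)−k} · tr(ρ^R_{n₁}(ξ₁) ∘ μ^{⊗(k+m(n₁−2))}) · tr(ρ^R_{n₂}(ξ₂) ∘ μ^{⊗(k+m(n₂−2))}). -/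
open scoped BigOperators
open Matrix

open Kronecker

/-- Triple splitting equivalence. -/
def tsplit (d p g q N : ℕ) (h : N = p + g + q) :
    (Fin N → Fin d) ≃ ((Fin p → Fin d) × (Fin g → Fin d)) × (Fin q → Fin d) where
  toFun a := ((fun y => a ⟨y, by omega⟩, fun y => a ⟨p + y, by omega⟩),
    fun y => a ⟨p + g + y, by omega⟩)
  invFun x z :=
    if h1 : (z : ℕ) < p then x.1.1 ⟨z, h1⟩
    else if h2 : (z : ℕ) < p + g then x.1.2 ⟨(z : ℕ) - p, by omega⟩
    else x.2 ⟨(z : ℕ) - (p + g), by omega⟩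
  left_inv a := by
    funext z
    dsimp only
    split_ifs with h1 h2 <;> congr 1 <;> ext <;> simp <;> omega
  right_inv x := by
    obtain ⟨⟨u, v⟩, w⟩ := x
    refine Prod.ext (Prod.ext ?_ ?_) ?_ <;> funext y <;> dsimp only
    · rw [dif_pos]
    · rw [dif_neg (by omega), dif_pos (by omega)]
      congr 1; ext; simp
    · rw [dif_neg (by omega), dif_neg (by omega)]
      congr 1; ext; simp

lemma trace_submatrix' {I J : Type*} [Fintype I] [Fintype J] (e : I ≃ J)
    (M : Matrix J J ℂ) : (M.submatrix e e).trace = M.trace :=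
  Fintype.sum_equiv e _ _ (fun _ => rfl)

lemma prod_split {M : Type*} [CommMonoid M] (p g q N : ℕ) (h : N = p + g + q)
    (f : Fin N → M) :
    ∏ x, f x = (∏ y : Fin p, f ⟨y, by omega⟩) * (∏ y : Fin g, f ⟨p + y, by omega⟩) *
      ∏ y : Fin q, f ⟨p + g + y, by omega⟩ := by
  subst h
  rw [Fin.prod_univ_add (f := fun i : Fin (p + g + q) => f i),
    Fin.prod_univ_add (f := fun i : Fin (p + g) => f (Fin.castAdd q i))]
  rfl

lemma mpow_split (d p g q N : ℕ) (h : N = p + g + q) (μ : Matrix (Fin d) (Fin d) ℂ) :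
    mpow μ N = Matrix.submatrix
      (Matrix.kroneckerMap (· * ·) (Matrix.kroneckerMap (· * ·) (mpow μ p) (mpow μ g)) (mpow μ q))
      (tsplit d p g q N h) (tsplit d p g q N h) := by
  funext a b
  simp only [Matrix.submatrix_apply, Matrix.kroneckerMap_apply, mpow, tsplit, Equiv.coe_fn_mk]
  rw [prod_split p g q N h]

open Kronecker

noncomputable def embL (d p g q N : ℕ) (h : N = p + g + q) : MIM d p →* MIM d N where
  toFun f := Matrix.submatrix ((f ⊗ₖ (1 : MIM d g)) ⊗ₖ (1 : MIM d q))
      (tsplit d p g q N h) (tsplit d p g q N h)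
  map_one' := by
    rw [Matrix.one_kronecker_one, Matrix.one_kronecker_one, Matrix.submatrix_one_equiv]
  map_mul' f f' := by
    rw [Matrix.submatrix_mul_equiv, ← Matrix.mul_kronecker_mul, ← Matrix.mul_kronecker_mul,
      Matrix.one_mul, Matrix.mul_one]

noncomputable def embR (d p g q N : ℕ) (h : N = p + g + q) : MIM d q →* MIM d N where
  toFun f := Matrix.submatrix (((1 : MIM d p) ⊗ₖ (1 : MIM d g)) ⊗ₖ f)
      (tsplit d p g q N h) (tsplit d p g q N h)
  map_one' := by
    rw [Matrix.one_kronecker_one, Matrix.one_kronecker_one, Matrix.submatrix_one_equiv]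
  map_mul' f f' := by
    rw [Matrix.submatrix_mul_equiv, ← Matrix.mul_kronecker_mul, ← Matrix.mul_kronecker_mul,
      Matrix.one_mul, Matrix.mul_one]

/-- A matrix acting on the window `[s, s+k)` of `N` tensor factors. -/
noncomputable def window (d N s k : ℕ) (hs : s + k ≤ N) (R : MIM d k) : MIM d N :=
  fun a b =>
    if ∀ x : Fin N, ((x : ℕ) < s ∨ s + k ≤ (x : ℕ)) → a x = b x then
      R (fun y => a ⟨s + (y : ℕ), by omega⟩) (fun y => b ⟨s + (y : ℕ), by omega⟩)
    else 0

lemma window_left (d p g q N s k : ℕ) (h : N = p + g + q) (hs : s + k ≤ p)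
    (R : MIM d k) :
    window d N s k (by omega) R = embL d p g q N h (window d p s k hs R) := by
  funext a b
  simp only [embL, MonoidHom.coe_mk, OneHom.coe_mk, Matrix.submatrix_apply,
    Matrix.kroneckerMap_apply, tsplit, Equiv.coe_fn_mk, window, Matrix.one_apply]
  by_cases hP : ∀ x : Fin N, ((x : ℕ) < s ∨ s + k ≤ (x : ℕ)) → a x = b x
  · rw [if_pos hP]
    rw [if_pos (by
      intro x hx
      exact hP ⟨(x : ℕ), by omega⟩ (by simpa using hx))]
    rw [if_pos (by
      funext y
      exact hP ⟨p + (y : ℕ), by omega⟩ (by right; simp; omega))]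
    rw [if_pos (by
      funext y
      exact hP ⟨p + g + (y : ℕ), by omega⟩ (by right; simp; omega))]
    ring
  · rw [if_neg hP]
    by_cases h1 : ∀ x : Fin p, ((x : ℕ) < s ∨ s + k ≤ (x : ℕ)) →
        a ⟨(x : ℕ), by omega⟩ = b ⟨(x : ℕ), by omega⟩
    · by_cases h2 : (fun y : Fin g => a ⟨p + (y : ℕ), by omega⟩) =
          (fun y : Fin g => b ⟨p + (y : ℕ), by omega⟩)
      · by_cases h3 : (fun y : Fin q => a ⟨p + g + (y : ℕ), by omega⟩) =
            (fun y : Fin q => b ⟨p + g + (y : ℕ), by omega⟩)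
        · exfalso
          apply hP
          intro x hx
          rcases lt_or_ge (x : ℕ) p with hx1 | hx1
          · have := h1 ⟨(x : ℕ), hx1⟩ (by simpa using hx)
            simpa [Fin.eta] using this
          · rcases lt_or_ge (x : ℕ) (p + g) with hx2 | hx2
            · have := congrFun h2 ⟨(x : ℕ) - p, by omega⟩
              simp only at this
              convert this using 2 <;> ext <;> simp <;> omega
            · have := congrFun h3 ⟨(x : ℕ) - (p + g), by omega⟩
              simp only at this
              convert this using 2 <;> ext <;> simp <;> omega
        · rw [if_neg h3, mul_zero]
      · rw [if_neg h2, mul_zero, zero_mul]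
    · rw [if_neg h1, zero_mul, zero_mul]

lemma window_right (d p g q N s k : ℕ) (h : N = p + g + q) (hs : s + k ≤ q)
    (R : MIM d k) :
    window d N (p + g + s) k (by omega) R = embR d p g q N h (window d q s k hs R) := by
  funext a b
  simp only [embR, MonoidHom.coe_mk, OneHom.coe_mk, Matrix.submatrix_apply,
    Matrix.kroneckerMap_apply, tsplit, Equiv.coe_fn_mk, window, Matrix.one_apply]
  by_cases hP : ∀ x : Fin N, ((x : ℕ) < p + g + s ∨ p + g + s + k ≤ (x : ℕ)) → a x = b x
  · rw [if_pos hP]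
    rw [if_pos (by
      funext y
      exact hP ⟨(y : ℕ), by omega⟩ (by left; simp; omega))]
    rw [if_pos (by
      funext y
      exact hP ⟨p + (y : ℕ), by omega⟩ (by left; simp; omega))]
    rw [if_pos (by
      intro x hx
      have := hP ⟨p + g + (x : ℕ), by omega⟩ (by simp; omega)
      simpa using this)]
    rw [one_mul, one_mul]
    congr 1 <;> funext y <;> congr 1 <;> ext <;> simp <;> omega
  · rw [if_neg hP]
    by_cases h1 : (fun y : Fin p => a ⟨(y : ℕ), by omega⟩) =
        (fun y : Fin p => b ⟨(y : ℕ), by omega⟩)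
    · by_cases h2 : (fun y : Fin g => a ⟨p + (y : ℕ), by omega⟩) =
          (fun y : Fin g => b ⟨p + (y : ℕ), by omega⟩)
      · by_cases h3 : ∀ x : Fin q, ((x : ℕ) < s ∨ s + k ≤ (x : ℕ)) →
            a ⟨p + g + (x : ℕ), by omega⟩ = b ⟨p + g + (x : ℕ), by omega⟩
        · exfalso
          apply hP
          intro x hx
          rcases lt_or_ge (x : ℕ) p with hx1 | hx1
          · have := congrFun h1 ⟨(x : ℕ), hx1⟩
            simpa [Fin.eta] using this
          · rcases lt_or_ge (x : ℕ) (p + g) with hx2 | hx2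
            · have := congrFun h2 ⟨(x : ℕ) - p, by omega⟩
              simp only at this
              convert this using 2 <;> ext <;> simp <;> omega
            · have := h3 ⟨(x : ℕ) - (p + g), by omega⟩ (by simp; omega)
              convert this using 2 <;> ext <;> simp <;> omega
        · rw [if_neg h3, mul_zero]
      · rw [if_neg h2, mul_zero, zero_mul]
    · rw [if_neg h1, zero_mul, zero_mul]

lemma Rop_window (d k m n : ℕ) (R : MIM d k) (i : Fin (n - 1)) (s : ℕ) (hs : s = m * (i : ℕ))
    (hfit : s + k ≤ k + m * (n - 2)) :
    Rop d k m n R i = window d (k + m * (n - 2)) s k hfit R := by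
  subst hs; rfl

lemma trace_mpow (d g : ℕ) (μ : Matrix (Fin d) (Fin d) ℂ) :
    (mpow μ g).trace = μ.trace ^ g := by
  simp only [Matrix.trace, Matrix.diag, mpow]
  rw [← Fintype.piFinset_univ, ← Finset.prod_univ_sum (t := fun _ : Fin g => (Finset.univ : Finset (Fin d))) (f := fun _ j => μ j j)]
  simp [Finset.prod_const]

lemma trace_embLR (d p g q N : ℕ) (h : N = p + g + q) (f : MIM d p) (f' : MIM d q)
    (μ : Matrix (Fin d) (Fin d) ℂ) :
    Matrix.trace (embL d p g q N h f * embR d p g q N h f' * mpow μ N) =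
      Matrix.trace μ ^ g * (Matrix.trace (f * mpow μ p) * Matrix.trace (f' * mpow μ q)) := by
  rw [mpow_split d p g q N h]
  simp only [embL, embR, MonoidHom.coe_mk, OneHom.coe_mk]
  rw [Matrix.submatrix_mul_equiv, Matrix.submatrix_mul_equiv, trace_submatrix',
    ← Matrix.mul_kronecker_mul, ← Matrix.mul_kronecker_mul,
    ← Matrix.mul_kronecker_mul, ← Matrix.mul_kronecker_mul,
    Matrix.trace_kronecker, Matrix.trace_kronecker, Matrix.mul_one, Matrix.one_mul,
    Matrix.one_mul, Matrix.one_mul, trace_mpow]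
  ring



set_option maxHeartbeats 1000000 in
theorem stmt9 (d k m n₁ n₂ l : ℕ) (hd : 0 < d) (hm : 0 < m) (hmk : m < k)
    (hn₁ : 2 ≤ n₁) (hn₂ : 2 ≤ n₂) (hl : k ≤ m * (l + 2))
    (R : MIM d k) (hR : IsGYB d k m R) (μ : Matrix (Fin d) (Fin d) ℂ)
    (ρ : BraidGroup (n₁ + n₂ + l) →* (MIM d (k + m * (n₁ + n₂ + l - 2)))ˣ)
    (hρ : ∀ i : Fin (n₁ + n₂ + l - 1),
      (ρ (PresentedGroup.of i)).val = Rop d k m (n₁ + n₂ + l) R i)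
    (ρ₁ : BraidGroup n₁ →* (MIM d (k + m * (n₁ - 2)))ˣ)
    (hρ₁ : ∀ i : Fin (n₁ - 1), (ρ₁ (PresentedGroup.of i)).val = Rop d k m n₁ R i)
    (ρ₂ : BraidGroup n₂ →* (MIM d (k + m * (n₂ - 2)))ˣ)
    (hρ₂ : ∀ i : Fin (n₂ - 1), (ρ₂ (PresentedGroup.of i)).val = Rop d k m n₂ R i)
    (ι₁ : BraidGroup n₁ →* BraidGroup (n₁ + n₂ + l))
    (hι₁ : ∀ i : Fin (n₁ - 1), ι₁ (PresentedGroup.of i) =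
      PresentedGroup.of ⟨(i : ℕ), by have := i.isLt; omega⟩)
    (ι₂ : BraidGroup n₂ →* BraidGroup (n₁ + n₂ + l))
    (hι₂ : ∀ i : Fin (n₂ - 1), ι₂ (PresentedGroup.of i) =
      PresentedGroup.of ⟨n₁ + l + (i : ℕ), by have := i.isLt; omega⟩)
    (ξ₁ : BraidGroup n₁) (ξ₂ : BraidGroup n₂) :
    Matrix.trace ((ρ (ι₁ ξ₁ * ι₂ ξ₂)).val * mpow μ (k + m * (n₁ + n₂ + l - 2))) =
      Matrix.trace μ ^ (m * (l + 2) - k) *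
        (Matrix.trace ((ρ₁ ξ₁).val * mpow μ (k + m * (n₁ - 2))) *
          Matrix.trace ((ρ₂ ξ₂).val * mpow μ (k + m * (n₂ - 2)))) := by
  have e1 : m * (n₁ + n₂ + l - 2) = m * (n₁ - 2) + m * (l + 2) + m * (n₂ - 2) := by
    rw [← Nat.mul_add, ← Nat.mul_add]
    congr 1
    omega
  have e2 : m * (n₁ - 2) + m * (l + 2) = m * (n₁ + l) := by
    rw [← Nat.mul_add]
    congr 1
    omega
  have hsum : k + m * (n₁ + n₂ + l - 2) =
      (k + m * (n₁ - 2)) + (m * (l + 2) - k) + (k + m * (n₂ - 2)) := by omega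
  have hcomp₁ : ρ.comp ι₁ =
      (Units.map ((embL d (k + m * (n₁ - 2)) (m * (l + 2) - k) (k + m * (n₂ - 2))
        (k + m * (n₁ + n₂ + l - 2)) hsum) : MIM d (k + m * (n₁ - 2)) →* MIM d (k + m * (n₁ + n₂ + l - 2)))).comp ρ₁ := by
    apply PresentedGroup.ext
    intro i
    refine Units.ext ?_
    simp only [MonoidHom.comp_apply, hι₁ i, hρ, Units.coe_map, MonoidHom.coe_coe, hρ₁]
    have hfit1 : m * (i : ℕ) + k ≤ k + m * (n₁ - 2) := by
      have := Nat.mul_le_mul_left m (show (i : ℕ) ≤ n₁ - 2 by have := i.isLt; omega)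
      omega
    rw [Rop_window d k m (n₁ + n₂ + l) R ⟨(i : ℕ), _⟩ (m * (i : ℕ)) rfl (by omega),
      Rop_window d k m n₁ R i (m * (i : ℕ)) rfl hfit1,
      window_left d (k + m * (n₁ - 2)) (m * (l + 2) - k) (k + m * (n₂ - 2))
        (k + m * (n₁ + n₂ + l - 2)) (m * (i : ℕ)) k hsum hfit1 R]
  have hcomp₂ : ρ.comp ι₂ =
      (Units.map ((embR d (k + m * (n₁ - 2)) (m * (l + 2) - k) (k + m * (n₂ - 2))
        (k + m * (n₁ + n₂ + l - 2)) hsum) : MIM d (k + m * (n₂ - 2)) →* MIM d (k + m * (n₁ + n₂ + l - 2)))).comp ρ₂ := by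
    apply PresentedGroup.ext
    intro i
    refine Units.ext ?_
    simp only [MonoidHom.comp_apply, hι₂ i, hρ, Units.coe_map, MonoidHom.coe_coe, hρ₂]
    have hfit2 : m * (i : ℕ) + k ≤ k + m * (n₂ - 2) := by
      have := Nat.mul_le_mul_left m (show (i : ℕ) ≤ n₂ - 2 by have := i.isLt; omega)
      omega
    have hoff : m * ((⟨n₁ + l + (i : ℕ), by have := i.isLt; omega⟩ :
        Fin (n₁ + n₂ + l - 1)) : ℕ) =
        (k + m * (n₁ - 2)) + (m * (l + 2) - k) + m * (i : ℕ) := by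
      simp only [Fin.val_mk]
      rw [show n₁ + l + (i : ℕ) = (n₁ + l) + (i : ℕ) from rfl, Nat.mul_add]
      omega
    rw [Rop_window d k m (n₁ + n₂ + l) R ⟨n₁ + l + (i : ℕ), by have := i.isLt; omega⟩
        ((k + m * (n₁ - 2)) + (m * (l + 2) - k) + m * (i : ℕ)) hoff.symm (by omega),
      Rop_window d k m n₂ R i (m * (i : ℕ)) rfl hfit2,
      window_right d (k + m * (n₁ - 2)) (m * (l + 2) - k) (k + m * (n₂ - 2))
        (k + m * (n₁ + n₂ + l - 2)) (m * (i : ℕ)) k hsum hfit2 R]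
  have q₁ : (ρ (ι₁ ξ₁)).val = embL d (k + m * (n₁ - 2)) (m * (l + 2) - k) (k + m * (n₂ - 2))
      (k + m * (n₁ + n₂ + l - 2)) hsum (ρ₁ ξ₁).val := by
    have := DFunLike.congr_fun hcomp₁ ξ₁
    simp only [MonoidHom.comp_apply] at this
    rw [this]
    rfl
  have q₂ : (ρ (ι₂ ξ₂)).val = embR d (k + m * (n₁ - 2)) (m * (l + 2) - k) (k + m * (n₂ - 2))
      (k + m * (n₁ + n₂ + l - 2)) hsum (ρ₂ ξ₂).val := by
    have := DFunLike.congr_fun hcomp₂ ξ₂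
    simp only [MonoidHom.comp_apply] at this
    rw [this]
    rfl
  rw [_root_.map_mul ρ, Units.val_mul, q₁, q₂, trace_embLR]
end

section
/- For every real θ, the operator R = R_III(θ) on V^{⊗3}, V = ℂ², is a unitary matrix and is a generalized Yang-Baxter operator of type (2,3,1): it is invertible, satisfies (R⊗Id_V)∘(Id_V⊗R)∘(R⊗Id_V) = (Id_V⊗R)∘(R⊗Id_V)∘(Id_V⊗R) on V^{⊗4}, and satisfies far-commutativity (R⊗Id_V^{⊗(j−2)})∘(Id_V^{⊗(j−2)}⊗R) = (Id_V^{⊗(j−2)}⊗R)∘(R⊗Id_V^{⊗(j−2)}) for all j ≥ 4. -/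
open scoped BigOperators
open Matrix

/-- Lexicographic identification of `(Fin 3 → Fin 2)` with `Fin 8`. -/
def emb (v : Fin 3 → Fin 2) : Fin 8 :=
  ⟨4 * (v 0 : ℕ) + 2 * (v 1 : ℕ) + (v 2 : ℕ), by
    have := (v 0).isLt; have := (v 1).isLt; have := (v 2).isLt; omega⟩

/-- View an `8×8` matrix as an endomorphism of `(ℂ²)^{⊗3}` via the
lexicographically ordered basis. -/
def ofMat8 (M : Matrix (Fin 8) (Fin 8) ℂ) : MIM 2 3 :=
  fun a b => M (emb a) (emb b)

/-- The `(2,3,1)` operator of type I. -/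
noncomputable def RI (θ : ℝ) : MIM 2 3 :=
  ofMat8 <| ((Real.sqrt 2 : ℂ))⁻¹ •
    (Matrix.reindex finSumFinEquiv finSumFinEquiv <| Matrix.fromBlocks
      !![1, 0, 1, 0;
         0, Complex.I, 0, Complex.exp (θ * Complex.I);
         -Complex.I, 0, Complex.I, 0;
         0, -Complex.I * Complex.exp (-θ * Complex.I), 0, 1] 0 0
      !![Complex.I, 0, Complex.exp (θ * Complex.I), 0;
         0, 1, 0, -Complex.exp (2 * θ * Complex.I);
         -Complex.I * Complex.exp (-θ * Complex.I), 0, 1, 0;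
         0, Complex.I * Complex.exp (-2 * θ * Complex.I), 0, Complex.I])

/-- The `(2,3,1)` operator of type II. -/
noncomputable def RII (θ : ℝ) : MIM 2 3 :=
  ofMat8 <| ((Real.sqrt 2 : ℂ))⁻¹ •
    (Matrix.reindex finSumFinEquiv finSumFinEquiv <| Matrix.fromBlocks
      !![1, 0, 1, 0;
         0, Complex.I, 0, Complex.exp (θ * Complex.I);
         -1, 0, 1, 0;
         0, Complex.exp (-θ * Complex.I), 0, Complex.I] 0 0
      !![Complex.I, 0, Complex.exp (θ * Complex.I), 0;
         0, 1, 0, -Complex.exp (2 * θ * Complex.I);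
         Complex.exp (-θ * Complex.I), 0, Complex.I, 0;
         0, Complex.exp (-2 * θ * Complex.I), 0, 1])

/-- The `(2,3,1)` operator of type III. -/
noncomputable def RIII (θ : ℝ) : MIM 2 3 :=
  ofMat8 <| ((Real.sqrt 2 : ℂ))⁻¹ •
    (Matrix.reindex finSumFinEquiv finSumFinEquiv <| Matrix.fromBlocks
      !![1, 0, 1, 0;
         0, 1, 0, Complex.exp (θ * Complex.I);
         -1, 0, 1, 0;
         0, -Complex.exp (-θ * Complex.I), 0, 1] 0 0
      !![1, 0, -Complex.exp (θ * Complex.I), 0;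
         0, 1, 0, -Complex.exp (2 * θ * Complex.I);
         Complex.exp (-θ * Complex.I), 0, 1, 0;
         0, Complex.exp (-2 * θ * Complex.I), 0, 1])

/-- The `4×4` antidiagonal matrix `J`. -/
def Jmat : Matrix (Fin 4) (Fin 4) ℂ :=
  !![0, 0, 0, 1;
     0, 0, 1, 0;
     0, 1, 0, 0;
     1, 0, 0, 0]

/-- The `(2,3,2)` operator of Rowell–Zhang–Wu–Ge. -/
noncomputable def R232 : MIM 2 3 :=
  ofMat8 <| ((Real.sqrt 2 : ℂ))⁻¹ •
    (Matrix.reindex finSumFinEquiv finSumFinEquiv <|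
      Matrix.fromBlocks 1 Jmat (-Jmat) 1)


/-! ### Auxiliary machinery for `stmt13` -/

/-- generalized monomial matrix -/
def Mon {d n : ℕ} (σ : (Fin n → Fin d) → (Fin n → Fin d)) (s : (Fin n → Fin d) → ℂ) :
    MIM d n := fun r c => if c = σ r then s r else 0

def flip2 : Fin 2 → Fin 2 := fun x => 1 - x

noncomputable def sc (θ : ℝ) (x y z : Fin 2) : ℂ :=
  (if x = y then 1 else -1) *
    Complex.exp ((((x : ℕ) + (z : ℕ) : ℕ) : ℂ) * (if y = 0 then 1 else -1) * θ * Complex.I)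

lemma fin2cases (x : Fin 2) : x = 0 ∨ x = 1 := by omega

lemma flip2_flip2 (u : Fin 2) : flip2 (flip2 u) = u := by revert u; decide

lemma sc_sq (θ : ℝ) (x y z : Fin 2) : sc θ x y z * sc θ x (flip2 y) z = -1 := by
  fin_cases x <;> fin_cases y <;> fin_cases z <;> simp [sc, flip2, ← Complex.exp_add]

lemma sc_anti (θ : ℝ) (w x y z : Fin 2) :
    sc θ w x y * sc θ (flip2 x) y z = -(sc θ x y z * sc θ w x (flip2 y)) := by
  fin_cases w <;> fin_cases x <;> fin_cases y <;> fin_cases z <;>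
    simp [sc, flip2, ← Complex.exp_add] <;> (congr 1; ring)

lemma sc_conj (θ : ℝ) (x y z : Fin 2) :
    (starRingEnd ℂ) (sc θ x (flip2 y) z) = -(sc θ x y z) := by
  fin_cases x <;> fin_cases y <;> fin_cases z <;>
    simp [sc, flip2, ← Complex.exp_conj, _root_.map_mul, Complex.conj_I, Complex.conj_ofReal,
      map_ofNat] <;> ring_nf

lemma Mon_mul {d n : ℕ} (σ τ : (Fin n → Fin d) → (Fin n → Fin d)) (s t) :
    (Mon σ s : MIM d n) * Mon τ t = Mon (fun r => τ (σ r)) (fun r => s r * t (σ r)) := by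
  ext a b
  simp only [Mon, Matrix.mul_apply, ite_mul, zero_mul, mul_ite, mul_zero]
  rw [Finset.sum_eq_single (σ a)] <;> simp +contextual

lemma Mon_id_neg {d n : ℕ} : (Mon id (fun _ => (-1 : ℂ)) : MIM d n) = -1 := by
  ext a b
  simp [Mon, Matrix.one_apply, eq_comm]
  split <;> simp

lemma Mon_neg {d n : ℕ} (σ : (Fin n → Fin d) → (Fin n → Fin d)) (s) :
    -(Mon σ s : MIM d n) = Mon σ (fun r => -(s r)) := by
  ext a b; simp [Mon]; split <;> simp

/-- squares to `-1` -/
lemma Mon_sq (θ : ℝ) {N : ℕ} (p0 p1 p2 : Fin N) (h01 : p0 ≠ p1) (h21 : p2 ≠ p1) :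
    (Mon (fun r => Function.update r p1 (flip2 (r p1)))
        (fun r => sc θ (r p0) (r p1) (r p2)) : MIM 2 N) *
      Mon (fun r => Function.update r p1 (flip2 (r p1)))
        (fun r => sc θ (r p0) (r p1) (r p2)) = -1 := by
  rw [Mon_mul]
  rw [show (fun r : Fin N → Fin 2 => Function.update (Function.update r p1 (flip2 (r p1))) p1
        (flip2 (Function.update r p1 (flip2 (r p1)) p1))) = id from
      funext fun r => by
        simp [Function.update_self, Function.update_idem, flip2_flip2]]
  rw [show (fun r : Fin N → Fin 2 => sc θ (r p0) (r p1) (r p2) *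
        sc θ (Function.update r p1 (flip2 (r p1)) p0) (Function.update r p1 (flip2 (r p1)) p1)
          (Function.update r p1 (flip2 (r p1)) p2)) = fun _ => (-1 : ℂ) from
      funext fun r => by
        rw [Function.update_of_ne h01, Function.update_of_ne h21, Function.update_self]
        exact sc_sq θ _ _ _]
  exact Mon_id_neg

lemma Mon_anticomm (θ : ℝ) {N : ℕ} (p0 p1 p2 p3 : Fin N)
    (h01 : p0 ≠ p1) (h02 : p0 ≠ p2) (h12 : p1 ≠ p2) (h13 : p1 ≠ p3) (h23 : p2 ≠ p3) :
    (Mon (fun r => Function.update r p1 (flip2 (r p1)))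
        (fun r => sc θ (r p0) (r p1) (r p2)) : MIM 2 N) *
      Mon (fun r => Function.update r p2 (flip2 (r p2)))
        (fun r => sc θ (r p1) (r p2) (r p3)) =
    -((Mon (fun r => Function.update r p2 (flip2 (r p2)))
        (fun r => sc θ (r p1) (r p2) (r p3)) : MIM 2 N) *
      Mon (fun r => Function.update r p1 (flip2 (r p1)))
        (fun r => sc θ (r p0) (r p1) (r p2))) := by
  rw [Mon_mul, Mon_mul, Mon_neg]
  have e1 : (fun r : Fin N → Fin 2 => Function.update (Function.update r p1 (flip2 (r p1))) p2
      (flip2 (Function.update r p1 (flip2 (r p1)) p2))) =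
      fun r => Function.update (Function.update r p2 (flip2 (r p2))) p1
      (flip2 (Function.update r p2 (flip2 (r p2)) p1)) := by
    funext r
    rw [Function.update_of_ne (Ne.symm h12), Function.update_of_ne h12,
      Function.update_comm h12]
  rw [e1]
  have e2 : (fun r : Fin N → Fin 2 => sc θ (r p0) (r p1) (r p2) *
      sc θ (Function.update r p1 (flip2 (r p1)) p1) (Function.update r p1 (flip2 (r p1)) p2)
        (Function.update r p1 (flip2 (r p1)) p3)) =
      fun r => -(sc θ (r p1) (r p2) (r p3) *
        sc θ (Function.update r p2 (flip2 (r p2)) p0) (Function.update r p2 (flip2 (r p2)) p1)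
          (Function.update r p2 (flip2 (r p2)) p2)) := by
    funext r
    rw [Function.update_self, Function.update_of_ne (Ne.symm h12),
      Function.update_of_ne (Ne.symm h13), Function.update_of_ne h02,
      Function.update_of_ne h12, Function.update_self]
    exact sc_anti θ _ _ _ _
  rw [e2]

lemma Mon_far_comm {N : ℕ} (p0 p1 p2 q0 q1 q2 : Fin N)
    (f g : Fin 2 → Fin 2 → Fin 2 → ℂ)
    (hq0 : q0 ≠ p1) (hq1 : q1 ≠ p1) (hq2 : q2 ≠ p1)
    (hp0 : p0 ≠ q1) (hp1 : p1 ≠ q1) (hp2 : p2 ≠ q1) :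
    (Mon (fun r => Function.update r p1 (flip2 (r p1)))
        (fun r => f (r p0) (r p1) (r p2)) : MIM 2 N) *
      Mon (fun r => Function.update r q1 (flip2 (r q1)))
        (fun r => g (r q0) (r q1) (r q2)) =
    (Mon (fun r => Function.update r q1 (flip2 (r q1)))
        (fun r => g (r q0) (r q1) (r q2)) : MIM 2 N) *
      Mon (fun r => Function.update r p1 (flip2 (r p1)))
        (fun r => f (r p0) (r p1) (r p2)) := by
  rw [Mon_mul, Mon_mul]
  have e1 : (fun r : Fin N → Fin 2 => Function.update (Function.update r p1 (flip2 (r p1))) q1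
      (flip2 (Function.update r p1 (flip2 (r p1)) q1))) =
      fun r => Function.update (Function.update r q1 (flip2 (r q1))) p1
      (flip2 (Function.update r q1 (flip2 (r q1)) p1)) := by
    funext r
    rw [Function.update_of_ne hq1, Function.update_of_ne hp1,
      Function.update_comm hp1]
  rw [e1]
  have e2 : (fun r : Fin N → Fin 2 => f (r p0) (r p1) (r p2) *
      g (Function.update r p1 (flip2 (r p1)) q0) (Function.update r p1 (flip2 (r p1)) q1)
        (Function.update r p1 (flip2 (r p1)) q2)) =
      fun r => g (r q0) (r q1) (r q2) *
        f (Function.update r q1 (flip2 (r q1)) p0) (Function.update r q1 (flip2 (r q1)) p1)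
          (Function.update r q1 (flip2 (r q1)) p2) := by
    funext r
    rw [Function.update_of_ne hq0, Function.update_of_ne hq1, Function.update_of_ne hq2,
      Function.update_of_ne hp0, Function.update_of_ne hp1, Function.update_of_ne hp2]
    ring
  rw [e2]

lemma Mon_star_self (θ : ℝ) {N : ℕ} (p0 p1 p2 : Fin N) (h01 : p0 ≠ p1) (h21 : p2 ≠ p1) :
    star (Mon (fun r => Function.update r p1 (flip2 (r p1)))
        (fun r => sc θ (r p0) (r p1) (r p2)) : MIM 2 N) =
    -(Mon (fun r => Function.update r p1 (flip2 (r p1)))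
        (fun r => sc θ (r p0) (r p1) (r p2)) : MIM 2 N) := by
  have hσ : ∀ r : Fin N → Fin 2, Function.update (Function.update r p1 (flip2 (r p1))) p1
      (flip2 (Function.update r p1 (flip2 (r p1)) p1)) = r := by
    intro r
    simp [Function.update_self, Function.update_idem, flip2_flip2]
  ext a b
  simp only [Matrix.star_apply, Mon, Matrix.neg_apply]
  by_cases h : b = Function.update a p1 (flip2 (a p1))
  · subst h
    rw [if_pos (hσ a).symm, if_pos rfl]
    have : star (sc θ (Function.update a p1 (flip2 (a p1)) p0)
        (Function.update a p1 (flip2 (a p1)) p1) (Function.update a p1 (flip2 (a p1)) p2)) =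
        (starRingEnd ℂ) (sc θ (a p0) (flip2 (a p1)) (a p2)) := by
      rw [Function.update_of_ne h01, Function.update_of_ne h21, Function.update_self]; rfl
    rw [this, sc_conj]
  · rw [if_neg h, if_neg, star_zero, neg_zero]
    intro hc
    exact h (by rw [hc, hσ])

set_option maxRecDepth 100000 in
/-- decomposition of `RIII` as `(√2)⁻¹ • (1 + M)` with `M` monomial -/
lemma RIII_decomp (θ : ℝ) : RIII θ = ((Real.sqrt 2 : ℂ))⁻¹ •
    (1 + Mon (fun v => Function.update v 1 (flip2 (v 1))) (fun v => sc θ (v 0) (v 1) (v 2))) := by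
  ext a b
  have e0 : (finSumFinEquiv.symm (0:Fin 8) : Fin 4 ⊕ Fin 4) = Sum.inl 0 := by decide
  have e1 : (finSumFinEquiv.symm (1:Fin 8) : Fin 4 ⊕ Fin 4) = Sum.inl 1 := by decide
  have e2 : (finSumFinEquiv.symm (2:Fin 8) : Fin 4 ⊕ Fin 4) = Sum.inl 2 := by decide
  have e3 : (finSumFinEquiv.symm (3:Fin 8) : Fin 4 ⊕ Fin 4) = Sum.inl 3 := by decide
  have e4 : (finSumFinEquiv.symm (4:Fin 8) : Fin 4 ⊕ Fin 4) = Sum.inr 0 := by decide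
  have e5 : (finSumFinEquiv.symm (5:Fin 8) : Fin 4 ⊕ Fin 4) = Sum.inr 1 := by decide
  have e6 : (finSumFinEquiv.symm (6:Fin 8) : Fin 4 ⊕ Fin 4) = Sum.inr 2 := by decide
  have e7 : (finSumFinEquiv.symm (7:Fin 8) : Fin 4 ⊕ Fin 4) = Sum.inr 3 := by decide
  have ha : a = ![a 0, a 1, a 2] := by funext i; fin_cases i <;> rfl
  have hb : b = ![b 0, b 1, b 2] := by funext i; fin_cases i <;> rfl
  rw [ha, hb]
  rcases fin2cases (a 0) with h|h <;> rw [h] <;> clear h <;>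
  rcases fin2cases (a 1) with h|h <;> rw [h] <;> clear h <;>
  rcases fin2cases (a 2) with h|h <;> rw [h] <;> clear h <;>
  rcases fin2cases (b 0) with h|h <;> rw [h] <;> clear h <;>
  rcases fin2cases (b 1) with h|h <;> rw [h] <;> clear h <;>
  rcases fin2cases (b 2) with h|h <;> rw [h] <;> clear h <;>
  · simp (config := { decide := true }) [RIII, ofMat8, emb, Mon, sc, flip2, Matrix.one_apply,
      Function.update, Matrix.fromBlocks, Matrix.smul_apply, e0, e1, e2, e3, e4,
      e5, e6, e7]
    try norm_num

lemma Rop_smul (d k m n : ℕ) (c : ℂ) (R : MIM d k) (i : Fin (n - 1)) :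
    Rop d k m n (c • R) i = c • Rop d k m n R i := by
  ext a b
  simp only [Rop, Matrix.smul_apply, smul_eq_mul]
  split <;> simp

lemma Rop_add (d k m n : ℕ) (R S : MIM d k) (i : Fin (n - 1)) :
    Rop d k m n (R + S) i = Rop d k m n R i + Rop d k m n S i := by
  ext a b
  simp only [Rop, Matrix.add_apply]
  split <;> simp

lemma Rop_one (d k m n : ℕ) (i : Fin (n - 1)) :
    Rop d k m n (1 : MIM d k) i = 1 := by
  ext a b
  by_cases hab : a = b
  · subst hab
    simp [Rop, Matrix.one_apply]
  · have h1 : (1 : MIM _ _) a b = 0 := by simp [Matrix.one_apply, hab]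
    rw [h1]
    simp only [Rop, Matrix.one_apply]
    split_ifs with hC hin
    · exfalso; apply hab; funext x
      by_cases hx : (x : ℕ) < m * (i : ℕ) ∨ m * (i : ℕ) + k ≤ (x : ℕ)
      · exact hC x hx
      · push_neg at hx
        have hy : (x : ℕ) - m * (i : ℕ) < k := by omega
        have h2 := congrFun hin ⟨(x : ℕ) - m * (i : ℕ), hy⟩
        simp only at h2
        calc a x = a ⟨m * (i : ℕ) + ((x : ℕ) - m * (i : ℕ)), by omega⟩ := by
              congr 1; exact Fin.ext (by simp; omega)
          _ = b ⟨m * (i : ℕ) + ((x : ℕ) - m * (i : ℕ)), by omega⟩ := h2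
          _ = b x := by congr 1; exact Fin.ext (by simp; omega)
    · rfl
    · rfl

/-- window positions for `k = 3`, `m = 1` -/
def pos (n : ℕ) (i : Fin (n - 1)) (c : Fin 3) : Fin (3 + 1 * (n - 2)) :=
  ⟨(i : ℕ) + (c : ℕ), by have := i.isLt; have := c.isLt; omega⟩

lemma Rop_Mon (n : ℕ) (i : Fin (n - 1)) (s3 : (Fin 3 → Fin 2) → ℂ) :
    Rop 2 3 1 n (Mon (fun v => Function.update v 1 (flip2 (v 1))) s3) i =
      Mon (fun r => Function.update r (pos n i 1) (flip2 (r (pos n i 1))))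
        (fun r => s3 (fun y => r (pos n i y))) := by
  ext a b
  have aeq : ∀ (u v : Fin (3 + 1 * (n - 2))), (u : ℕ) = (v : ℕ) → a u = a v :=
    fun u v h => by rw [Fin.ext h]
  have beq : ∀ (u v : Fin (3 + 1 * (n - 2))), (u : ℕ) = (v : ℕ) → b u = b v :=
    fun u v h => by rw [Fin.ext h]
  simp only [Rop, Mon]
  split_ifs with hC hin h2 h3 h4
  · exact congrArg s3 (funext fun y => aeq _ _ (by simp [pos]))
  · exfalso; apply h2; funext x
    rw [Function.update_apply]
    split_ifs with hx
    · have h1 := congrFun hin (1 : Fin 3)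
      simp only [Function.update_self] at h1
      calc b x = b ⟨1 * (i : ℕ) + ((1 : Fin 3) : ℕ), by have := i.isLt; omega⟩ := by
            apply beq; rw [hx]; simp [pos]
        _ = flip2 (a ⟨1 * (i : ℕ) + ((1 : Fin 3) : ℕ), by have := i.isLt; omega⟩) := h1
        _ = flip2 (a (pos n i 1)) := congrArg flip2 (aeq _ _ (by simp [pos]))
    · by_cases hoff : (x : ℕ) < 1 * (i : ℕ) ∨ 1 * (i : ℕ) + 3 ≤ (x : ℕ)
      · exact (hC x hoff).symm
      · push_neg at hoff
        have hx' : (x : ℕ) ≠ (i : ℕ) + 1 := fun h => hx (Fin.ext (by simp [pos, h]))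
        have hcase : (x : ℕ) = (i : ℕ) ∨ (x : ℕ) = (i : ℕ) + 2 := by omega
        rcases hcase with h | h
        · have h0 := congrFun hin (0 : Fin 3)
          rw [Function.update_of_ne (by decide)] at h0
          calc b x = b ⟨1 * (i : ℕ) + ((0 : Fin 3) : ℕ), by have := i.isLt; omega⟩ :=
                beq _ _ (by simp [h])
            _ = a ⟨1 * (i : ℕ) + ((0 : Fin 3) : ℕ), by have := i.isLt; omega⟩ := h0
            _ = a x := aeq _ _ (by simp [h])
        · have h0 := congrFun hin (2 : Fin 3)
          rw [Function.update_of_ne (by decide)] at h0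
          calc b x = b ⟨1 * (i : ℕ) + ((2 : Fin 3) : ℕ), by have := i.isLt; omega⟩ :=
                beq _ _ (by simp [h])
            _ = a ⟨1 * (i : ℕ) + ((2 : Fin 3) : ℕ), by have := i.isLt; omega⟩ := h0
            _ = a x := aeq _ _ (by simp [h])
  · exfalso; apply hin; funext y
    have hby : b ⟨1 * (i : ℕ) + (y : ℕ), by have := i.isLt; have := y.isLt; omega⟩ =
        Function.update a (pos n i 1) (flip2 (a (pos n i 1)))
          ⟨1 * (i : ℕ) + (y : ℕ), by have := i.isLt; have := y.isLt; omega⟩ := by rw [h3]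
    rw [hby, Function.update_apply, Function.update_apply]
    fin_cases y
    · rw [if_neg (by simp [pos, Fin.ext_iff]), if_neg (by decide)]
    · rw [if_pos (by simp [pos, Fin.ext_iff]), if_pos (by decide)]
      exact congrArg flip2 (aeq _ _ (by simp [pos]))
    · rw [if_neg (by simp [pos, Fin.ext_iff]), if_neg (by decide)]
  · rfl
  · exfalso; apply hC; intro x hx
    rw [h4, Function.update_apply, if_neg]
    intro h; rw [h] at hx; simp [pos] at hx; try omega
  · rfl

lemma Rop_eq (θ : ℝ) (n : ℕ) (i : Fin (n - 1)) :
    Rop 2 3 1 n (RIII θ) i = ((Real.sqrt 2 : ℂ))⁻¹ •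
      (1 + Mon (fun r => Function.update r (pos n i 1) (flip2 (r (pos n i 1))))
        (fun r => sc θ (r (pos n i 0)) (r (pos n i 1)) (r (pos n i 2)))) := by
  rw [RIII_decomp θ, Rop_smul, Rop_add, Rop_one, Rop_Mon]

lemma sqrt2_inv_star : star ((Real.sqrt 2 : ℂ))⁻¹ = ((Real.sqrt 2 : ℂ))⁻¹ := by
  simp [Complex.star_def, map_inv₀, Complex.conj_ofReal]

lemma sqrt2_inv_sq : ((Real.sqrt 2 : ℂ))⁻¹ * ((Real.sqrt 2 : ℂ))⁻¹ = (2 : ℂ)⁻¹ := by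
  rw [← mul_inv, ← Complex.ofReal_mul, Real.mul_self_sqrt (by norm_num)]
  norm_num

theorem stmt13 (θ : ℝ) :
    RIII θ ∈ Matrix.unitaryGroup (Fin 3 → Fin 2) ℂ ∧ IsGYB 2 3 1 (RIII θ) := by
  set c : ℂ := ((Real.sqrt 2 : ℂ))⁻¹ with hc
  set M : MIM 2 3 := Mon (fun v => Function.update v 1 (flip2 (v 1)))
      (fun v => sc θ (v 0) (v 1) (v 2)) with hM
  have hMsq : M * M = -1 := Mon_sq θ (0 : Fin 3) 1 2 (by decide) (by decide)
  have hMstar : star M = -M := Mon_star_self θ (0 : Fin 3) 1 2 (by decide) (by decide)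
  have hRR : RIII θ * star (RIII θ) = 1 := by
    rw [RIII_decomp θ, star_smul, ← hc, ← hM, sqrt2_inv_star, star_add, star_one, hMstar,
      Matrix.smul_mul, Matrix.mul_smul, smul_smul, sqrt2_inv_sq]
    have h2 : ((1 : MIM 2 3) + M) * (1 + -M) = (2 : ℂ) • 1 := by
      have h : ((1 : MIM 2 3) + M) * (1 + -M) = 1 - M * M := by noncomm_ring
      rw [h, hMsq, two_smul]; noncomm_ring
    rw [h2, smul_smul]
    norm_num
  have hRR' : star (RIII θ) * RIII θ = 1 := by
    rw [RIII_decomp θ, star_smul, ← hc, ← hM, sqrt2_inv_star, star_add, star_one, hMstar,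
      Matrix.smul_mul, Matrix.mul_smul, smul_smul, sqrt2_inv_sq]
    have h2 : ((1 : MIM 2 3) + -M) * (1 + M) = (2 : ℂ) • 1 := by
      have h : ((1 : MIM 2 3) + -M) * (1 + M) = 1 - M * M := by noncomm_ring
      rw [h, hMsq, two_smul]; noncomm_ring
    rw [h2, smul_smul]
    norm_num
  refine ⟨Matrix.mem_unitaryGroup_iff.mpr hRR, ?_, ?_, ?_⟩
  · exact ⟨⟨RIII θ, star (RIII θ), hRR, hRR'⟩, rfl⟩
  · -- Yang–Baxter relation
    rw [Rop_eq θ 3 0, Rop_eq θ 3 1, ← hc]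
    set A : MIM 2 (3 + 1 * (3 - 2)) := Mon
        (fun r => Function.update r (pos 3 0 1) (flip2 (r (pos 3 0 1))))
        (fun r => sc θ (r (pos 3 0 0)) (r (pos 3 0 1)) (r (pos 3 0 2))) with hA
    set B : MIM 2 (3 + 1 * (3 - 2)) := Mon
        (fun r => Function.update r (pos 3 1 1) (flip2 (r (pos 3 1 1))))
        (fun r => sc θ (r (pos 3 1 0)) (r (pos 3 1 1)) (r (pos 3 1 2))) with hB
    have hAsq : A * A = -1 :=
      Mon_sq θ (pos 3 0 0) (pos 3 0 1) (pos 3 0 2) (by decide) (by decide)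
    have hBsq : B * B = -1 :=
      Mon_sq θ (pos 3 1 0) (pos 3 1 1) (pos 3 1 2) (by decide) (by decide)
    have hABanti : A * B = -(B * A) :=
      Mon_anticomm θ (pos 3 0 0) (pos 3 0 1) (pos 3 0 2)
        (⟨3, by norm_num⟩ : Fin (3 + 1 * (3 - 2)))
        (by decide) (by decide) (by decide) (by decide) (by decide)
    have hBA : B * A = -(A * B) := by rw [hABanti, neg_neg]
    have hABA : A * B * A = B := by
      rw [hABanti, show -(B * A) * A = -(B * (A * A)) from by noncomm_ring, hAsq]
      noncomm_ring
    have hBAB : B * A * B = A := by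
      rw [hBA, show -(A * B) * B = -(A * (B * B)) from by noncomm_ring, hBsq]
      noncomm_ring
    have expand : ∀ X Y : MIM 2 (3 + 1 * (3 - 2)), X * X = -1 → X * Y * X = Y →
        (c • (1 + X)) * (c • (1 + Y)) * (c • (1 + X)) =
          (c * c * c) • ((X + X) + (Y + Y) + (X * Y + Y * X)) := by
      intro X Y hX hXYX
      simp only [Matrix.smul_mul, Matrix.mul_smul, smul_smul]
      rw [show c * (c * c) = c * c * c from by ring]
      congr 1
      calc (1 + X) * (1 + Y) * (1 + X)
          = 1 + (X + X) + Y + (X * Y + Y * X) + X * X + X * Y * X := by noncomm_ring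
        _ = 1 + (X + X) + Y + (X * Y + Y * X) + -1 + Y := by rw [hX, hXYX]
        _ = (X + X) + (Y + Y) + (X * Y + Y * X) := by abel
    rw [expand A B hAsq hABA, expand B A hBsq hBAB]
    congr 1
    abel
  · -- far commutativity
    intro j hj
    rw [Rop_eq θ j ⟨0, by omega⟩, Rop_eq θ j ⟨j - 2, by omega⟩, ← hc]
    set A : MIM 2 (3 + 1 * (j - 2)) := Mon
        (fun r => Function.update r (pos j ⟨0, by omega⟩ 1) (flip2 (r (pos j ⟨0, by omega⟩ 1))))
        (fun r => sc θ (r (pos j ⟨0, by omega⟩ 0)) (r (pos j ⟨0, by omega⟩ 1))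
          (r (pos j ⟨0, by omega⟩ 2))) with hA
    set C : MIM 2 (3 + 1 * (j - 2)) := Mon
        (fun r => Function.update r (pos j ⟨j - 2, by omega⟩ 1)
          (flip2 (r (pos j ⟨j - 2, by omega⟩ 1))))
        (fun r => sc θ (r (pos j ⟨j - 2, by omega⟩ 0)) (r (pos j ⟨j - 2, by omega⟩ 1))
          (r (pos j ⟨j - 2, by omega⟩ 2))) with hC2
    have hAC : A * C = C * A := by
      apply Mon_far_comm (pos j ⟨0, by omega⟩ 0) (pos j ⟨0, by omega⟩ 1) (pos j ⟨0, by omega⟩ 2)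
        (pos j ⟨j - 2, by omega⟩ 0) (pos j ⟨j - 2, by omega⟩ 1) (pos j ⟨j - 2, by omega⟩ 2)
        (sc θ) (sc θ) <;> simp [pos, Fin.ext_iff] <;> omega
    rw [Matrix.smul_mul, Matrix.smul_mul, Matrix.mul_smul, Matrix.mul_smul, smul_smul, smul_smul]
    congr 1
    have h1 : ((1 : MIM 2 (3 + 1 * (j - 2))) + A) * (1 + C) = 1 + A + C + A * C := by
      noncomm_ring
    have h2 : ((1 : MIM 2 (3 + 1 * (j - 2))) + C) * (1 + A) = 1 + A + C + C * A := by
      noncomm_ring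
    rw [h1, h2, hAC]
end

section
/- The operator R₂₃₂ on V^{⊗3}, V = ℂ², is a unitary matrix and is a generalized Yang-Baxter operator of type (2,3,2): it is invertible, satisfies (R₂₃₂⊗Id_{V^{⊗2}})∘(Id_{V^{⊗2}}⊗R₂₃₂)∘(R₂₃₂⊗Id_{V^{⊗2}}) = (Id_{V^{⊗2}}⊗R₂₃₂)∘(R₂₃₂⊗Id_{V^{⊗2}})∘(Id_{V^{⊗2}}⊗R₂₃₂) on V^{⊗5}, and satisfies far-commutativity (R₂₃₂⊗Id_{V^{⊗2}}^{⊗(j−2)})∘(Id_{V^{⊗2}}^{⊗(j−2)}⊗R₂₃₂) = (Id_{V^{⊗2}}^{⊗(j−2)}⊗R₂₃₂)∘(R₂₃₂⊗Id_{V^{⊗2}}^{⊗(j−2)}) for all j ≥ 4. -/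
open scoped BigOperators
open Matrix

/-! ### Auxiliary machinery -/

/-- Flip on `Fin 2`. -/
def fl : Fin 2 → Fin 2 := fun x => if x = 0 then 1 else 0

/-- Sign `±1` attached to a bit. -/
noncomputable def sg (x : Fin 2) : ℂ := if x = 0 then 1 else -1

lemma fl_fl (x : Fin 2) : fl (fl x) = x := by fin_cases x <;> rfl

lemma sg_fl (x : Fin 2) : sg (fl x) = -sg x := by fin_cases x <;> simp [sg, fl]

lemma sg_mul_sg (x : Fin 2) : sg x * sg x = 1 := by fin_cases x <;> simp [sg]

lemma star_sg (x : Fin 2) : starRingEnd ℂ (sg x) = sg x := by fin_cases x <;> simp [sg]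

/-- Signed permutation matrix. -/
noncomputable def spm {N : ℕ} (g : (Fin N → Fin 2) → (Fin N → Fin 2))
    (s : (Fin N → Fin 2) → ℂ) : MIM 2 N := fun a b => s a * (if b = g a then 1 else 0)

/-- Flip the window `[lo, hi)`. -/
def flA {N : ℕ} (lo hi : ℕ) (a : Fin N → Fin 2) : Fin N → Fin 2 :=
  fun x => if lo ≤ (x:ℕ) ∧ (x:ℕ) < hi then fl (a x) else a x

lemma spm_mul_spm {N} (g1 g2 s1 s2) :
    (spm (N := N) g1 s1) * spm g2 s2 = spm (g2 ∘ g1) (fun a => s1 a * s2 (g1 a)) := by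
  ext a b
  simp only [spm, Matrix.mul_apply, mul_ite, ite_mul, mul_zero, zero_mul, mul_one,
    Function.comp]
  rw [Finset.sum_eq_single (g1 a)]
  · by_cases h : b = g2 (g1 a) <;> simp [h]
  · intro c _ hc; simp [hc]
  · simp

lemma spm_congr {N} {g g' s s'} (hg : ∀ a, g a = g' a) (hs : ∀ a, s a = s' a) :
    spm (N := N) g s = spm g' s' := by
  ext a b; simp [spm, hs, funext hg]

lemma spm_neg {N} (g s) : spm (N := N) g (fun a => -(s a)) = - spm g s := by
  ext a b; simp only [spm, Matrix.neg_apply, neg_mul]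

lemma spm_id_neg {N} : spm (N := N) (fun a => a) (fun _ => (-1:ℂ)) = -1 := by
  ext a b
  simp only [spm, Matrix.neg_apply, Matrix.one_apply, neg_mul, one_mul, eq_comm]

lemma spm_conjT {N} (g s) (hg : ∀ a, g (g a) = a) :
    (spm (N := N) g s)ᴴ = spm g (fun a => starRingEnd ℂ (s (g a))) := by
  ext a b
  simp only [Matrix.conjTranspose_apply, spm, star_mul', apply_ite (starRingEnd ℂ),
    _root_.map_one, _root_.map_zero]
  by_cases h : b = g a
  · subst h; simp [hg, mul_comm]
  · have h' : a ≠ g b := fun hh => h (by rw [hh, hg])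
    simp [h, h']

lemma spm_sq_neg_one {N} (g s) (hg : ∀ a, g (g a) = a)
    (hs : ∀ a, s a * s (g a) = -1) :
    spm (N := N) g s * spm g s = -1 := by
  rw [spm_mul_spm]
  exact (spm_congr hg hs).trans spm_id_neg

/-! ### Pointwise description of `Rop` -/

lemma Rop_apply (d k m n : ℕ) (R : MIM d k) (i : Fin (n - 1)) (a b) :
    Rop d k m n R i a b =
      if ∀ x : Fin (k + m * (n - 2)),
          ((x : ℕ) < m * (i : ℕ) ∨ m * (i : ℕ) + k ≤ (x : ℕ)) → a x = b x then
        R (fun y => a ⟨m * (i : ℕ) + (y : ℕ), by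
              have h1 : (i : ℕ) < n - 1 := i.isLt
              have h2 : m * (i : ℕ) ≤ m * (n - 2) := Nat.mul_le_mul_left m (by omega)
              have h3 := y.isLt
              omega⟩)
          (fun y => b ⟨m * (i : ℕ) + (y : ℕ), by
              have h1 : (i : ℕ) < n - 1 := i.isLt
              have h2 : m * (i : ℕ) ≤ m * (n - 2) := Nat.mul_le_mul_left m (by omega)
              have h3 := y.isLt
              omega⟩)
      else 0 := rfl

/-! ### Disjoint windows commute -/

lemma Rop_mul_apply_disjoint (d k m n : ℕ) (R : MIM d k) (p q : Fin (n - 1))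
    (hd : m * (p:ℕ) + k ≤ m * (q:ℕ) ∨ m * (q:ℕ) + k ≤ m * (p:ℕ))
    (a b : Fin (k + m * (n-2)) → Fin d) :
    (Rop d k m n R p * Rop d k m n R q) a b =
      if ∀ x : Fin (k + m * (n - 2)),
          ((x : ℕ) < m * (p : ℕ) ∨ m * (p : ℕ) + k ≤ (x : ℕ)) →
          ((x : ℕ) < m * (q : ℕ) ∨ m * (q : ℕ) + k ≤ (x : ℕ)) → a x = b x then
        R (fun y => a ⟨m * (p : ℕ) + (y : ℕ), by
              have h1 : (p : ℕ) < n - 1 := p.isLt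
              have h2 : m * (p : ℕ) ≤ m * (n - 2) := Nat.mul_le_mul_left m (by omega)
              have h3 := y.isLt; omega⟩)
          (fun y => b ⟨m * (p : ℕ) + (y : ℕ), by
              have h1 : (p : ℕ) < n - 1 := p.isLt
              have h2 : m * (p : ℕ) ≤ m * (n - 2) := Nat.mul_le_mul_left m (by omega)
              have h3 := y.isLt; omega⟩) *
        R (fun y => a ⟨m * (q : ℕ) + (y : ℕ), by
              have h1 : (q : ℕ) < n - 1 := q.isLt
              have h2 : m * (q : ℕ) ≤ m * (n - 2) := Nat.mul_le_mul_left m (by omega)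
              have h3 := y.isLt; omega⟩)
          (fun y => b ⟨m * (q : ℕ) + (y : ℕ), by
              have h1 : (q : ℕ) < n - 1 := q.isLt
              have h2 : m * (q : ℕ) ≤ m * (n - 2) := Nat.mul_le_mul_left m (by omega)
              have h3 := y.isLt; omega⟩)
      else 0 := by
  classical
  set c₀ : Fin (k + m * (n-2)) → Fin d :=
    fun x => if m * (p:ℕ) ≤ (x:ℕ) ∧ (x:ℕ) < m * (p:ℕ) + k then b x else a x with hc₀
  rw [Matrix.mul_apply]
  rw [Fintype.sum_eq_single c₀]
  · -- value at c₀
    rw [Rop_apply, Rop_apply]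
    have hC1 : ∀ x : Fin (k + m * (n-2)),
        ((x:ℕ) < m * (p:ℕ) ∨ m * (p:ℕ) + k ≤ (x:ℕ)) → a x = c₀ x := by
      intro x hx
      simp only [hc₀]
      rw [if_neg (by omega)]
    rw [if_pos hC1]
    have hres1 : ∀ (y : Fin k) (h : m * (p:ℕ) + (y:ℕ) < k + m * (n-2)),
        c₀ ⟨m * (p:ℕ) + (y:ℕ), h⟩ = b ⟨m * (p:ℕ) + (y:ℕ), h⟩ := by
      intro y h
      simp only [hc₀]
      rw [if_pos (by have := y.isLt; omega)]
    have hres2 : ∀ (y : Fin k) (h : m * (q:ℕ) + (y:ℕ) < k + m * (n-2)),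
        c₀ ⟨m * (q:ℕ) + (y:ℕ), h⟩ = a ⟨m * (q:ℕ) + (y:ℕ), h⟩ := by
      intro y h
      simp only [hc₀]
      rw [if_neg (by have := y.isLt; omega)]
    by_cases hcond : ∀ x : Fin (k + m * (n - 2)),
        ((x : ℕ) < m * (p : ℕ) ∨ m * (p : ℕ) + k ≤ (x : ℕ)) →
        ((x : ℕ) < m * (q : ℕ) ∨ m * (q : ℕ) + k ≤ (x : ℕ)) → a x = b x
    · rw [if_pos hcond]
      have hC2 : ∀ x : Fin (k + m * (n-2)),
          ((x:ℕ) < m * (q:ℕ) ∨ m * (q:ℕ) + k ≤ (x:ℕ)) → c₀ x = b x := by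
        intro x hx
        simp only [hc₀]
        by_cases hin : m * (p:ℕ) ≤ (x:ℕ) ∧ (x:ℕ) < m * (p:ℕ) + k
        · rw [if_pos hin]
        · rw [if_neg hin]
          exact hcond x (by omega) hx
      rw [if_pos hC2]
      congr 1
      · congr 1
        funext y
        exact hres1 y _
      · congr 1
        funext y
        exact hres2 y _
    · rw [if_neg hcond]
      have hC2 : ¬ ∀ x : Fin (k + m * (n-2)),
          ((x:ℕ) < m * (q:ℕ) ∨ m * (q:ℕ) + k ≤ (x:ℕ)) → c₀ x = b x := by
        intro hC2
        apply hcond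
        intro x hxp hxq
        have := hC2 x hxq
        simp only [hc₀] at this
        rw [if_neg (by omega)] at this
        exact this
      rw [if_neg hC2, mul_zero]
  · -- other terms vanish
    intro c hc
    rw [Rop_apply, Rop_apply]
    by_cases hC1 : ∀ x : Fin (k + m * (n-2)),
        ((x:ℕ) < m * (p:ℕ) ∨ m * (p:ℕ) + k ≤ (x:ℕ)) → a x = c x
    · by_cases hC2 : ∀ x : Fin (k + m * (n-2)),
          ((x:ℕ) < m * (q:ℕ) ∨ m * (q:ℕ) + k ≤ (x:ℕ)) → c x = b x
      · exfalso
        apply hc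
        funext x
        simp only [hc₀]
        by_cases hin : m * (p:ℕ) ≤ (x:ℕ) ∧ (x:ℕ) < m * (p:ℕ) + k
        · rw [if_pos hin]
          exact hC2 x (by omega)
        · rw [if_neg hin]
          exact (hC1 x (by omega)).symm
      · rw [if_neg hC2, mul_zero]
    · rw [if_neg hC1, zero_mul]

lemma Rop_comm (d k m n : ℕ) (R : MIM d k) (p q : Fin (n - 1))
    (hd : m * (p:ℕ) + k ≤ m * (q:ℕ)) :
    Rop d k m n R p * Rop d k m n R q = Rop d k m n R q * Rop d k m n R p := by
  ext a b
  rw [Rop_mul_apply_disjoint d k m n R p q (Or.inl hd) a b,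
    Rop_mul_apply_disjoint d k m n R q p (Or.inr hd) a b]
  by_cases hcond : ∀ x : Fin (k + m * (n - 2)),
      ((x : ℕ) < m * (p : ℕ) ∨ m * (p : ℕ) + k ≤ (x : ℕ)) →
      ((x : ℕ) < m * (q : ℕ) ∨ m * (q : ℕ) + k ≤ (x : ℕ)) → a x = b x
  · rw [if_pos hcond, if_pos (fun x h1 h2 => hcond x h2 h1), mul_comm]
  · rw [if_neg hcond, if_neg (fun hc => hcond (fun x h1 h2 => hc x h2 h1))]

/-! ### Structure of `R232` -/

/-- The scalar `1/√2`. -/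
noncomputable def csq : ℂ := ((Real.sqrt 2 : ℝ) : ℂ)⁻¹

/-- The phase part of `R232` as a signed permutation on three bits. -/
noncomputable def K3 : MIM 2 3 := spm (flA 0 3) (fun v => sg (v 0))

set_option maxHeartbeats 1000000 in
lemma M8_apply (p q : Fin 8) :
    (Matrix.reindex finSumFinEquiv finSumFinEquiv
        (Matrix.fromBlocks 1 Jmat (-Jmat) 1) : Matrix (Fin 8) (Fin 8) ℂ) p q =
      (if p = q then 1 else 0) +
      (if (p:ℕ) + (q:ℕ) = 7 then (if (p:ℕ) < 4 then 1 else -1) else 0) := by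
  fin_cases p <;> fin_cases q <;>
  norm_num [Jmat, Matrix.one_apply, Matrix.fromBlocks, finSumFinEquiv, Fin.addCases,
    Fin.castLT, Fin.subNat, Fin.ext_iff, Matrix.vecHead, Matrix.vecTail,
    show ((0:Fin 8):ℕ) = 0 from rfl, show ((1:Fin 8):ℕ) = 1 from rfl,
    show ((2:Fin 8):ℕ) = 2 from rfl, show ((3:Fin 8):ℕ) = 3 from rfl,
    show ((4:Fin 8):ℕ) = 4 from rfl, show ((5:Fin 8):ℕ) = 5 from rfl,
    show ((6:Fin 8):ℕ) = 6 from rfl, show ((7:Fin 8):ℕ) = 7 from rfl,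
    show ((0:Fin 4):ℕ) = 0 from rfl, show ((1:Fin 4):ℕ) = 1 from rfl,
    show ((2:Fin 4):ℕ) = 2 from rfl, show ((3:Fin 4):ℕ) = 3 from rfl,
    show (⟨0, by omega⟩ : Fin 4) = 0 from rfl, show (⟨1, by omega⟩ : Fin 4) = 1 from rfl,
    show (⟨2, by omega⟩ : Fin 4) = 2 from rfl, show (⟨3, by omega⟩ : Fin 4) = 3 from rfl] <;>
  rfl

lemma emb_inj_iff : ∀ v w : Fin 3 → Fin 2, emb v = emb w ↔ v = w := by decide

lemma emb_sum_iff : ∀ v w : Fin 3 → Fin 2,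
    ((emb v : ℕ) + (emb w : ℕ) = 7) ↔ w = flA 0 3 v := by decide

lemma emb_lt_iff : ∀ v : Fin 3 → Fin 2, ((emb v : ℕ) < 4) ↔ v 0 = 0 := by decide

lemma R232_eq : R232 = csq • ((1 : MIM 2 3) + K3) := by
  ext v w
  have h0 : R232 v w = csq *
      ((Matrix.reindex finSumFinEquiv finSumFinEquiv
        (Matrix.fromBlocks 1 Jmat (-Jmat) 1) : Matrix (Fin 8) (Fin 8) ℂ) (emb v) (emb w)) := rfl
  rw [h0, M8_apply]
  simp only [Matrix.smul_apply, Matrix.add_apply, Matrix.one_apply, smul_eq_mul, K3, spm]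
  simp only [emb_inj_iff, emb_sum_iff, emb_lt_iff]
  simp [sg, mul_ite]

lemma flA_invol {N : ℕ} (lo hi : ℕ) (a : Fin N → Fin 2) : flA lo hi (flA lo hi a) = a := by
  funext x
  simp only [flA]
  split <;> simp [fl_fl]

lemma flA03_eq (v : Fin 3 → Fin 2) : flA 0 3 v = fun y => fl (v y) := by
  funext y
  exact if_pos ⟨Nat.zero_le _, y.isLt⟩

lemma Rop_eq_s14 (i : Fin 2) (o hi : ℕ) (ho : 2 * (i:ℕ) = o) (hhi : hi = o + 3)
    (h5 : o + 3 ≤ 5) :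
    Rop 2 3 2 3 R232 i =
      csq • ((1 : MIM 2 5) + spm (flA o hi) (fun a => sg (a ⟨o, by omega⟩))) := by
  subst hhi
  subst ho
  have hilt : (i:ℕ) < 2 := i.isLt
  ext a b
  rw [Rop_apply]
  by_cases hc : ∀ x : Fin (3 + 2 * (3 - 2)),
      ((x:ℕ) < 2 * (i:ℕ) ∨ 2 * (i:ℕ) + 3 ≤ (x:ℕ)) → a x = b x
  · rw [if_pos hc, R232_eq]
    have e1 : ((fun y : Fin 3 => a ⟨2 * (i:ℕ) + (y:ℕ), by have := y.isLt; omega⟩) =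
        (fun y : Fin 3 => b ⟨2 * (i:ℕ) + (y:ℕ), by have := y.isLt; omega⟩)) ↔ a = b := by
      constructor
      · intro h
        funext x
        by_cases hx : (x:ℕ) < 2*(i:ℕ) ∨ 2*(i:ℕ)+3 ≤ (x:ℕ)
        · exact hc x hx
        · push_neg at hx
          have hxx : x = ⟨2*(i:ℕ) + ((⟨(x:ℕ) - 2*(i:ℕ), by omega⟩ : Fin 3) : ℕ),
              by have := x.isLt; simp; omega⟩ := by
            apply Fin.ext; simp; omega
          rw [hxx]
          exact congrFun h ⟨(x:ℕ) - 2*(i:ℕ), by omega⟩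
      · intro h; rw [h]
    have e2 : ((fun y : Fin 3 => b ⟨2 * (i:ℕ) + (y:ℕ), by have := y.isLt; omega⟩) =
        flA 0 3 (fun y : Fin 3 => a ⟨2 * (i:ℕ) + (y:ℕ), by have := y.isLt; omega⟩)) ↔
        b = flA (2*(i:ℕ)) (2*(i:ℕ)+3) a := by
      rw [flA03_eq]
      constructor
      · intro h
        funext x
        by_cases hx : 2*(i:ℕ) ≤ (x:ℕ) ∧ (x:ℕ) < 2*(i:ℕ)+3
        · have hxx : x = ⟨2*(i:ℕ) + ((⟨(x:ℕ) - 2*(i:ℕ), by omega⟩ : Fin 3) : ℕ),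
              by have := x.isLt; simp; omega⟩ := by
            apply Fin.ext; simp; omega
          simp only [flA]
          rw [if_pos hx, hxx]
          exact congrFun h ⟨(x:ℕ) - 2*(i:ℕ), by omega⟩
        · simp only [flA]
          rw [if_neg hx]
          exact (hc x (by omega)).symm
      · intro h
        funext y
        have := congrFun h ⟨2 * (i:ℕ) + (y:ℕ), by have := y.isLt; omega⟩
        simp only [flA] at this
        rw [if_pos (by have := y.isLt; omega)] at this
        exact this
    simp only [Matrix.smul_apply, Matrix.add_apply, Matrix.one_apply, smul_eq_mul,
      K3, spm, e1, e2]
    congr 2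
  · rw [if_neg hc]
    push_neg at hc
    obtain ⟨x, hx, hab⟩ := hc
    have h1 : a ≠ b := fun h => hab (congrFun h x)
    have h2 : b ≠ flA (2*(i:ℕ)) (2*(i:ℕ)+3) a := by
      intro h
      apply hab
      have := congrFun h x
      simp only [flA] at this
      rw [if_neg (by omega)] at this
      exact this.symm
    simp [Matrix.smul_apply, Matrix.add_apply, Matrix.one_apply, spm, h1, h2]

lemma braid_ring {α : Type*} [Ring α] (p q : α) (hp : p*p = -1) (hq : q*q = -1)
    (hpq : p*q = -(q*p)) : (1+p)*(1+q)*(1+p) = (1+q)*(1+p)*(1+q) := by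
  have h3 : p*q*p = q := by
    rw [hpq, neg_mul, mul_assoc, hp]; simp
  have h4 : q*p*q = p := by
    have hqp : q*p = -(p*q) := by rw [hpq, neg_neg]
    rw [hqp, neg_mul, mul_assoc, hq]; simp
  have e1 : (1+p)*(1+q)*(1+p) = 1 + (p+p) + q + (p*q + q*p) + p*p + p*q*p := by
    noncomm_ring
  have e2 : (1+q)*(1+p)*(1+q) = 1 + (q+q) + p + (q*p + p*q) + q*q + q*p*q := by
    noncomm_ring
  have h5 : p*q + q*p = 0 := by rw [hpq]; simp
  have h6 : q*p + p*q = 0 := by rw [hpq]; simp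
  rw [e1, e2, h3, h4, hp, hq, h5, h6]
  abel

/-- The two signed-flip matrices on five bits. -/
noncomputable def Pm : MIM 2 5 := spm (flA 0 3) (fun a => sg (a ⟨0, by omega⟩))
noncomputable def Qm : MIM 2 5 := spm (flA 2 5) (fun a => sg (a ⟨2, by omega⟩))

lemma Pm_sq : Pm * Pm = -1 := by
  refine spm_sq_neg_one _ _ (flA_invol 0 3) ?_
  intro a
  have h : (flA 0 3 a) ⟨0, by omega⟩ = fl (a ⟨0, by omega⟩) := by
    simp only [flA]
    rw [if_pos (by simp)]
  rw [h, sg_fl]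
  rw [mul_neg, sg_mul_sg]

lemma Qm_sq : Qm * Qm = -1 := by
  refine spm_sq_neg_one _ _ (flA_invol 2 5) ?_
  intro a
  have h : (flA 2 5 a) ⟨2, by omega⟩ = fl (a ⟨2, by omega⟩) := by
    simp only [flA]
    rw [if_pos (by simp)]
  rw [h, sg_fl]
  rw [mul_neg, sg_mul_sg]

lemma Pm_Qm : Pm * Qm = -(Qm * Pm) := by
  rw [Pm, Qm, spm_mul_spm, spm_mul_spm, ← spm_neg]
  refine spm_congr ?_ ?_
  · intro a
    show flA 2 5 (flA 0 3 a) = flA 0 3 (flA 2 5 a)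
    funext x
    simp only [flA]
    split <;> split <;> simp [fl_fl]
  · intro a
    have h1 : (flA 0 3 a) ⟨2, by omega⟩ = fl (a ⟨2, by omega⟩) := by
      simp only [flA]; rw [if_pos (by simp)]
    have h2 : (flA 2 5 a) ⟨0, by omega⟩ = a ⟨0, by omega⟩ := by
      simp only [flA]; rw [if_neg (by simp)]
    show sg (a ⟨0, by omega⟩) * sg ((flA 0 3 a) ⟨2, by omega⟩) =
      -(sg (a ⟨2, by omega⟩) * sg ((flA 2 5 a) ⟨0, by omega⟩))
    rw [h1, h2, sg_fl]
    ring

lemma K3_sq : K3 * K3 = -1 := by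
  refine spm_sq_neg_one _ _ (flA_invol 0 3) ?_
  intro a
  have h : (flA 0 3 a) 0 = fl (a 0) := by
    simp only [flA]
    rw [if_pos (by simp)]
  rw [h, sg_fl, mul_neg, sg_mul_sg]

lemma K3_star : (K3 : MIM 2 3)ᴴ = -K3 := by
  rw [K3, spm_conjT _ _ (flA_invol 0 3), ← spm_neg]
  refine spm_congr (fun a => rfl) ?_
  intro a
  have h : (flA 0 3 a) 0 = fl (a 0) := by
    simp only [flA]
    rw [if_pos (by simp)]
  rw [h, star_sg, sg_fl]

lemma csq_sq : csq * csq * 2 = 1 := by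
  simp only [csq]
  rw [← mul_inv]
  have h : ((Real.sqrt 2 : ℝ) : ℂ) * ((Real.sqrt 2 : ℝ) : ℂ) = 2 := by
    norm_cast
    exact Real.mul_self_sqrt (by norm_num)
  rw [h]
  norm_num

lemma star_csq : star csq = csq := by
  simp only [csq, star_inv₀, Complex.star_def, Complex.conj_ofReal]

lemma R232_mul_star : R232 * star R232 = 1 := by
  have hstar : star R232 = csq • ((1 : MIM 2 3) - K3) := by
    rw [R232_eq, star_smul, star_csq, Matrix.star_eq_conjTranspose,
      Matrix.conjTranspose_add, Matrix.conjTranspose_one, K3_star, sub_eq_add_neg]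
  rw [hstar, R232_eq]
  rw [Matrix.smul_mul, Matrix.mul_smul, smul_smul]
  have h2 : ((1 : MIM 2 3) + K3) * (1 - K3) = (2:ℂ) • (1 : MIM 2 3) := by
    have e : ((1 : MIM 2 3) + K3) * (1 - K3) = 1 - K3 * K3 := by noncomm_ring
    rw [e, K3_sq, sub_neg_eq_add, ← two_smul ℂ (1 : MIM 2 3)]
  rw [h2, smul_smul, csq_sq, one_smul]

theorem stmt14 :
    R232 ∈ Matrix.unitaryGroup (Fin 3 → Fin 2) ℂ ∧ IsGYB 2 3 2 R232 := by
  have hmem : R232 ∈ Matrix.unitaryGroup (Fin 3 → Fin 2) ℂ :=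
    Matrix.mem_unitaryGroup_iff.mpr R232_mul_star
  refine ⟨hmem, ?_, ?_, ?_⟩
  · exact ⟨⟨R232, star R232, R232_mul_star, mul_eq_one_comm.mp R232_mul_star⟩, rfl⟩
  · -- Yang–Baxter
    have h0 : Rop 2 3 2 3 R232 0 = csq • ((1 : MIM 2 5) + Pm) :=
      Rop_eq_s14 0 0 3 rfl rfl (by norm_num)
    have h1 : Rop 2 3 2 3 R232 1 = csq • ((1 : MIM 2 5) + Qm) :=
      Rop_eq_s14 1 2 5 rfl rfl (by norm_num)
    rw [h0, h1]
    simp only [Matrix.smul_mul, Matrix.mul_smul, smul_smul]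
    congr 1
    exact braid_ring Pm Qm Pm_sq Qm_sq Pm_Qm
  · -- far commutativity
    intro j hj
    exact Rop_comm 2 3 2 j R232 ⟨0, by omega⟩ ⟨j - 2, by omega⟩
      (by show 2 * 0 + 3 ≤ 2 * (j - 2); omega)
end

section
/- For every real θ, the operator R = R_I(θ) on V^{⊗3}, V = ℂ², is invertible and satisfies the skein relation e^{−iπ/4}·R + e^{iπ/4}·R^{−1} = Id_{V^{⊗3}}. -/
open scoped BigOperators
open Matrix

section Stmt16Aux

@[simp] lemma vec8e_0 {α : Type*} (a0 a1 a2 a3 a4 a5 a6 a7 : α) : ![a0,a1,a2,a3,a4,a5,a6,a7] 0 = a0 := rfl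
@[simp] lemma vec8e_1 {α : Type*} (a0 a1 a2 a3 a4 a5 a6 a7 : α) : ![a0,a1,a2,a3,a4,a5,a6,a7] 1 = a1 := rfl
@[simp] lemma vec8e_2 {α : Type*} (a0 a1 a2 a3 a4 a5 a6 a7 : α) : ![a0,a1,a2,a3,a4,a5,a6,a7] 2 = a2 := rfl
@[simp] lemma vec8e_3 {α : Type*} (a0 a1 a2 a3 a4 a5 a6 a7 : α) : ![a0,a1,a2,a3,a4,a5,a6,a7] 3 = a3 := rfl
@[simp] lemma vec8e_4 {α : Type*} (a0 a1 a2 a3 a4 a5 a6 a7 : α) : ![a0,a1,a2,a3,a4,a5,a6,a7] 4 = a4 := rfl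
@[simp] lemma vec8e_5 {α : Type*} (a0 a1 a2 a3 a4 a5 a6 a7 : α) : ![a0,a1,a2,a3,a4,a5,a6,a7] 5 = a5 := rfl
@[simp] lemma vec8e_6 {α : Type*} (a0 a1 a2 a3 a4 a5 a6 a7 : α) : ![a0,a1,a2,a3,a4,a5,a6,a7] 6 = a6 := rfl
@[simp] lemma vec8e_7 {α : Type*} (a0 a1 a2 a3 a4 a5 a6 a7 : α) : ![a0,a1,a2,a3,a4,a5,a6,a7] 7 = a7 := rfl

@[simp] lemma vec4e_0 {α : Type*} (a0 a1 a2 a3 : α) : ![a0,a1,a2,a3] 0 = a0 := rfl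
@[simp] lemma vec4e_1 {α : Type*} (a0 a1 a2 a3 : α) : ![a0,a1,a2,a3] 1 = a1 := rfl
@[simp] lemma vec4e_2 {α : Type*} (a0 a1 a2 a3 : α) : ![a0,a1,a2,a3] 2 = a2 := rfl
@[simp] lemma vec4e_3 {α : Type*} (a0 a1 a2 a3 : α) : ![a0,a1,a2,a3] 3 = a3 := rfl

@[simp] lemma vec8m_0 {α : Type*} (a0 a1 a2 a3 a4 a5 a6 a7 : α) : ![a0,a1,a2,a3,a4,a5,a6,a7] (⟨0, by norm_num⟩ : Fin 8) = a0 := rfl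
@[simp] lemma vec8m_1 {α : Type*} (a0 a1 a2 a3 a4 a5 a6 a7 : α) : ![a0,a1,a2,a3,a4,a5,a6,a7] (⟨1, by norm_num⟩ : Fin 8) = a1 := rfl
@[simp] lemma vec8m_2 {α : Type*} (a0 a1 a2 a3 a4 a5 a6 a7 : α) : ![a0,a1,a2,a3,a4,a5,a6,a7] (⟨2, by norm_num⟩ : Fin 8) = a2 := rfl
@[simp] lemma vec8m_3 {α : Type*} (a0 a1 a2 a3 a4 a5 a6 a7 : α) : ![a0,a1,a2,a3,a4,a5,a6,a7] (⟨3, by norm_num⟩ : Fin 8) = a3 := rfl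
@[simp] lemma vec8m_4 {α : Type*} (a0 a1 a2 a3 a4 a5 a6 a7 : α) : ![a0,a1,a2,a3,a4,a5,a6,a7] (⟨4, by norm_num⟩ : Fin 8) = a4 := rfl
@[simp] lemma vec8m_5 {α : Type*} (a0 a1 a2 a3 a4 a5 a6 a7 : α) : ![a0,a1,a2,a3,a4,a5,a6,a7] (⟨5, by norm_num⟩ : Fin 8) = a5 := rfl
@[simp] lemma vec8m_6 {α : Type*} (a0 a1 a2 a3 a4 a5 a6 a7 : α) : ![a0,a1,a2,a3,a4,a5,a6,a7] (⟨6, by norm_num⟩ : Fin 8) = a6 := rfl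
@[simp] lemma vec8m_7 {α : Type*} (a0 a1 a2 a3 a4 a5 a6 a7 : α) : ![a0,a1,a2,a3,a4,a5,a6,a7] (⟨7, by norm_num⟩ : Fin 8) = a7 := rfl
@[simp] lemma vec4m_0 {α : Type*} (a0 a1 a2 a3 : α) : ![a0,a1,a2,a3] (⟨0, by norm_num⟩ : Fin 4) = a0 := rfl
@[simp] lemma vec4m_1 {α : Type*} (a0 a1 a2 a3 : α) : ![a0,a1,a2,a3] (⟨1, by norm_num⟩ : Fin 4) = a1 := rfl
@[simp] lemma vec4m_2 {α : Type*} (a0 a1 a2 a3 : α) : ![a0,a1,a2,a3] (⟨2, by norm_num⟩ : Fin 4) = a2 := rfl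
@[simp] lemma vec4m_3 {α : Type*} (a0 a1 a2 a3 : α) : ![a0,a1,a2,a3] (⟨3, by norm_num⟩ : Fin 4) = a3 := rfl

@[simp] lemma fse_0 : (finSumFinEquiv.symm (0 : Fin 8) : Fin 4 ⊕ Fin 4) = Sum.inl 0 := by decide
@[simp] lemma fse_1 : (finSumFinEquiv.symm (1 : Fin 8) : Fin 4 ⊕ Fin 4) = Sum.inl 1 := by decide
@[simp] lemma fse_2 : (finSumFinEquiv.symm (2 : Fin 8) : Fin 4 ⊕ Fin 4) = Sum.inl 2 := by decide
@[simp] lemma fse_3 : (finSumFinEquiv.symm (3 : Fin 8) : Fin 4 ⊕ Fin 4) = Sum.inl 3 := by decide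
@[simp] lemma fse_4 : (finSumFinEquiv.symm (4 : Fin 8) : Fin 4 ⊕ Fin 4) = Sum.inr 0 := by decide
@[simp] lemma fse_5 : (finSumFinEquiv.symm (5 : Fin 8) : Fin 4 ⊕ Fin 4) = Sum.inr 1 := by decide
@[simp] lemma fse_6 : (finSumFinEquiv.symm (6 : Fin 8) : Fin 4 ⊕ Fin 4) = Sum.inr 2 := by decide
@[simp] lemma fse_7 : (finSumFinEquiv.symm (7 : Fin 8) : Fin 4 ⊕ Fin 4) = Sum.inr 3 := by decide

@[simp] lemma fse_mk_0 : (finSumFinEquiv.symm (⟨0, by norm_num⟩ : Fin 8) : Fin 4 ⊕ Fin 4) = Sum.inl 0 := by decide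
@[simp] lemma fse_mk_1 : (finSumFinEquiv.symm (⟨1, by norm_num⟩ : Fin 8) : Fin 4 ⊕ Fin 4) = Sum.inl 1 := by decide
@[simp] lemma fse_mk_2 : (finSumFinEquiv.symm (⟨2, by norm_num⟩ : Fin 8) : Fin 4 ⊕ Fin 4) = Sum.inl 2 := by decide
@[simp] lemma fse_mk_3 : (finSumFinEquiv.symm (⟨3, by norm_num⟩ : Fin 8) : Fin 4 ⊕ Fin 4) = Sum.inl 3 := by decide
@[simp] lemma fse_mk_4 : (finSumFinEquiv.symm (⟨4, by norm_num⟩ : Fin 8) : Fin 4 ⊕ Fin 4) = Sum.inr 0 := by decide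
@[simp] lemma fse_mk_5 : (finSumFinEquiv.symm (⟨5, by norm_num⟩ : Fin 8) : Fin 4 ⊕ Fin 4) = Sum.inr 1 := by decide
@[simp] lemma fse_mk_6 : (finSumFinEquiv.symm (⟨6, by norm_num⟩ : Fin 8) : Fin 4 ⊕ Fin 4) = Sum.inr 2 := by decide
@[simp] lemma fse_mk_7 : (finSumFinEquiv.symm (⟨7, by norm_num⟩ : Fin 8) : Fin 4 ⊕ Fin 4) = Sum.inr 3 := by decide

/-- Abstract version of the unscaled `R_I` matrix. -/
def Mabs (x x2 y y2 : ℂ) : Matrix (Fin 8) (Fin 8) ℂ :=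
  !![1, 0, 1, 0, 0, 0, 0, 0;
     0, Complex.I, 0, x, 0, 0, 0, 0;
     -Complex.I, 0, Complex.I, 0, 0, 0, 0, 0;
     0, -Complex.I * y, 0, 1, 0, 0, 0, 0;
     0, 0, 0, 0, Complex.I, 0, x, 0;
     0, 0, 0, 0, 0, 1, 0, -x2;
     0, 0, 0, 0, -Complex.I * y, 0, 1, 0;
     0, 0, 0, 0, 0, Complex.I * y2, 0, Complex.I]

set_option maxHeartbeats 4000000 in
lemma Mabs_quadratic (x x2 y y2 : ℂ) (hxy : y * x = 1) (hx2 : x2 = x * x)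
    (hy2 : y2 = y * y) :
    Mabs x x2 y y2 * Mabs x x2 y y2 =
      (1 + Complex.I) • Mabs x x2 y y2 - (2 * Complex.I) • 1 := by
  subst hx2 hy2
  ext i j
  fin_cases i <;> fin_cases j <;>
    simp only [Mabs, Matrix.mul_apply, Fin.sum_univ_eight, Matrix.sub_apply,
      Matrix.smul_apply, Matrix.one_apply, Matrix.of_apply,
      vec8e_0, vec8e_1, vec8e_2, vec8e_3, vec8e_4, vec8e_5, vec8e_6, vec8e_7,
      smul_eq_mul]
  all_goals (try norm_num [Fin.ext_iff])
  all_goals (try ring)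
  all_goals (try linear_combination (-Complex.I) * hxy)
  all_goals (try linear_combination (1 : ℂ) * Complex.I_sq)
  all_goals (try linear_combination (-1 : ℂ) * Complex.I_sq)
  all_goals (try linear_combination Complex.I * hxy)
  all_goals (try linear_combination (-Complex.I) * hxy + (1 : ℂ) * Complex.I_sq)
  all_goals (try linear_combination (-Complex.I) * hxy + (-1 : ℂ) * Complex.I_sq)
  all_goals (try linear_combination (-Complex.I - Complex.I * x * y) * hxy)
  all_goals (try linear_combination (-Complex.I - Complex.I * x * y) * hxy + (1 : ℂ) * Complex.I_sq)
  all_goals (try linear_combination (-Complex.I - Complex.I * x * y) * hxy + (-1 : ℂ) * Complex.I_sq)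

/-- The underlying `8 × 8` matrix of `RI θ` in abstract form. -/
lemma RI_big_eq (θ : ℝ) :
    (Matrix.reindex finSumFinEquiv finSumFinEquiv <| Matrix.fromBlocks
      !![1, 0, 1, 0;
         0, Complex.I, 0, Complex.exp (θ * Complex.I);
         -Complex.I, 0, Complex.I, 0;
         0, -Complex.I * Complex.exp (-θ * Complex.I), 0, 1] 0 0
      !![Complex.I, 0, Complex.exp (θ * Complex.I), 0;
         0, 1, 0, -Complex.exp (2 * θ * Complex.I);
         -Complex.I * Complex.exp (-θ * Complex.I), 0, 1, 0;
         0, Complex.I * Complex.exp (-2 * θ * Complex.I), 0, Complex.I]) =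
    Mabs (Complex.exp (θ * Complex.I)) (Complex.exp (2 * θ * Complex.I))
      (Complex.exp (-θ * Complex.I)) (Complex.exp (-2 * θ * Complex.I)) := by
  ext i j
  fin_cases i <;> fin_cases j <;>
    simp only [Matrix.reindex_apply, Matrix.submatrix_apply, fse_0, fse_1, fse_2,
      fse_3, fse_4, fse_5, fse_6, fse_7, fse_mk_0, fse_mk_1, fse_mk_2, fse_mk_3,
      fse_mk_4, fse_mk_5, fse_mk_6, fse_mk_7, Matrix.fromBlocks_apply₁₁,
      Matrix.fromBlocks_apply₁₂, Matrix.fromBlocks_apply₂₁, Matrix.fromBlocks_apply₂₂,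
      Matrix.of_apply, Matrix.zero_apply, Mabs,
      vec4e_0, vec4e_1, vec4e_2, vec4e_3,
      vec8e_0, vec8e_1, vec8e_2, vec8e_3, vec8e_4, vec8e_5, vec8e_6, vec8e_7,
      vec4m_0, vec4m_1, vec4m_2, vec4m_3,
      vec8m_0, vec8m_1, vec8m_2, vec8m_3, vec8m_4, vec8m_5, vec8m_6, vec8m_7]

/-- The lexicographic identification as an equivalence. -/
noncomputable def embE : (Fin 3 → Fin 2) ≃ Fin 8 :=
  Equiv.ofBijective emb (by decide)

lemma ofMat8_eq (M : Matrix (Fin 8) (Fin 8) ℂ) :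
    ofMat8 M = M.submatrix embE embE := rfl

lemma ofMat8_mul (M N : Matrix (Fin 8) (Fin 8) ℂ) :
    ofMat8 M * ofMat8 N = ofMat8 (M * N) := by
  rw [ofMat8_eq, ofMat8_eq, ofMat8_eq]
  exact Matrix.submatrix_mul_equiv M N _ embE _

lemma ofMat8_one : ofMat8 (1 : Matrix (Fin 8) (Fin 8) ℂ) = 1 := by
  rw [ofMat8_eq]; exact Matrix.submatrix_one_equiv embE

lemma ofMat8_smul (c : ℂ) (M : Matrix (Fin 8) (Fin 8) ℂ) :
    ofMat8 (c • M) = c • ofMat8 M := rfl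

lemma ofMat8_sub (M N : Matrix (Fin 8) (Fin 8) ℂ) :
    ofMat8 (M - N) = ofMat8 M - ofMat8 N := rfl

lemma exp_pi_I_div_four :
    Complex.exp (Real.pi * Complex.I / 4) =
      ((Real.sqrt 2 / 2 : ℝ) : ℂ) + ((Real.sqrt 2 / 2 : ℝ) : ℂ) * Complex.I := by
  rw [show ((Real.pi : ℂ) * Complex.I / 4) = ((Real.pi / 4 : ℝ) : ℂ) * Complex.I by
    push_cast; ring]
  rw [Complex.exp_mul_I, ← Complex.ofReal_cos, ← Complex.ofReal_sin,
    Real.cos_pi_div_four, Real.sin_pi_div_four]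

lemma exp_neg_pi_I_div_four :
    Complex.exp (-(Real.pi * Complex.I) / 4) =
      ((Real.sqrt 2 / 2 : ℝ) : ℂ) - ((Real.sqrt 2 / 2 : ℝ) : ℂ) * Complex.I := by
  rw [show (-((Real.pi : ℂ) * Complex.I) / 4) = ((-(Real.pi / 4) : ℝ) : ℂ) * Complex.I by
    push_cast; ring]
  rw [Complex.exp_mul_I, ← Complex.ofReal_cos, ← Complex.ofReal_sin,
    Real.cos_neg, Real.sin_neg, Real.cos_pi_div_four, Real.sin_pi_div_four]
  push_cast; ring

lemma sqrt2_mul_self : ((Real.sqrt 2 : ℝ) : ℂ) * ((Real.sqrt 2 : ℝ) : ℂ) = 2 := by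
  rw [← Complex.ofReal_mul, Real.mul_self_sqrt (by norm_num)]
  norm_num

lemma sqrt2_ne_zero : ((Real.sqrt 2 : ℝ) : ℂ) ≠ 0 := by
  intro h
  have := sqrt2_mul_self
  rw [h] at this
  norm_num at this

/-- Key quadratic relation for `RI`. -/
lemma RI_quadratic (θ : ℝ) :
    RI θ * RI θ =
      Complex.exp (Real.pi * Complex.I / 4) • RI θ - Complex.I • (1 : MIM 2 3) := by
  have hxy : Complex.exp (-θ * Complex.I) * Complex.exp (θ * Complex.I) = 1 := by
    rw [← Complex.exp_add]; ring_nf; exact Complex.exp_zero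
  have hx2 : Complex.exp (2 * θ * Complex.I) =
      Complex.exp (θ * Complex.I) * Complex.exp (θ * Complex.I) := by
    rw [← Complex.exp_add]; ring_nf
  have hy2 : Complex.exp (-2 * θ * Complex.I) =
      Complex.exp (-θ * Complex.I) * Complex.exp (-θ * Complex.I) := by
    rw [← Complex.exp_add]; ring_nf
  have hQ := Mabs_quadratic (Complex.exp (θ * Complex.I))
    (Complex.exp (2 * θ * Complex.I)) (Complex.exp (-θ * Complex.I))
    (Complex.exp (-2 * θ * Complex.I)) hxy hx2 hy2
  set x := Complex.exp (θ * Complex.I)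
  set x2 := Complex.exp (2 * θ * Complex.I)
  set y := Complex.exp (-θ * Complex.I)
  set y2 := Complex.exp (-2 * θ * Complex.I)
  set s : ℂ := ((Real.sqrt 2 : ℝ) : ℂ) with hs
  have hRI : RI θ = ofMat8 (s⁻¹ • Mabs x x2 y y2) := by
    unfold RI
    rw [RI_big_eq θ]
  have hscal : s⁻¹ * s⁻¹ * (1 + Complex.I) = Complex.exp (Real.pi * Complex.I / 4) * s⁻¹ := by
    rw [exp_pi_I_div_four]
    have h2 : s * s = 2 := by rw [hs]; exact sqrt2_mul_self
    have h0 : s ≠ 0 := by rw [hs]; exact sqrt2_ne_zero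
    push_cast
    field_simp
    linear_combination (-(1 + Complex.I)) * h2
  have hscal2 : s⁻¹ * s⁻¹ * (2 * Complex.I) = Complex.I := by
    have h2 : s * s = 2 := by rw [hs]; exact sqrt2_mul_self
    have h0 : s ≠ 0 := by rw [hs]; exact sqrt2_ne_zero
    field_simp
    linear_combination (-1 : ℂ) * h2
  rw [hRI, ofMat8_mul, ← ofMat8_one, ← ofMat8_smul, ← ofMat8_smul, ← ofMat8_sub]
  congr 1
  rw [smul_mul_assoc, mul_smul_comm, smul_smul, hQ, smul_sub, smul_smul, smul_smul,
    hscal, hscal2, ← smul_smul]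

end Stmt16Aux

theorem stmt16 (θ : ℝ) :
    IsUnit (RI θ) ∧
    Complex.exp (-(Real.pi * Complex.I) / 4) • RI θ +
      Complex.exp (Real.pi * Complex.I / 4) • (RI θ)⁻¹ = (1 : MIM 2 3) := by
  have hquad := RI_quadratic θ
  set u := Complex.exp (Real.pi * Complex.I / 4) with hu
  set v := Complex.exp (-(Real.pi * Complex.I) / 4) with hv
  set B : MIM 2 3 := Complex.I • RI θ - (Complex.I * u) • 1 with hB
  have hRB : RI θ * B = 1 := by
    rw [hB, mul_sub, mul_smul_comm, mul_smul_comm, mul_one, hquad, smul_sub,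
      smul_smul, smul_smul, Complex.I_mul_I, mul_comm Complex.I u]
    simp
  have hBR : B * RI θ = 1 := mul_eq_one_comm.mp hRB
  have hUnit : IsUnit (RI θ) := ⟨⟨RI θ, B, hRB, hBR⟩, rfl⟩
  have hinv : (RI θ)⁻¹ = B := Matrix.inv_eq_right_inv hRB
  refine ⟨hUnit, ?_⟩
  rw [hinv, hB]
  have hc1 : v + u * Complex.I = 0 := by
    rw [hu, hv, exp_pi_I_div_four, exp_neg_pi_I_div_four]
    linear_combination ((Real.sqrt 2 / 2 : ℝ) : ℂ) * Complex.I_sq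
  have hc2 : u * (Complex.I * u) = -1 := by
    rw [hu, exp_pi_I_div_four]
    have h2 := sqrt2_mul_self
    push_cast
    linear_combination (-1/2 : ℂ) * h2 + (((Real.sqrt 2 : ℝ) : ℂ) * ((Real.sqrt 2 : ℝ) : ℂ) / 2 + ((Real.sqrt 2 : ℝ) : ℂ) * ((Real.sqrt 2 : ℝ) : ℂ) * Complex.I / 4) * Complex.I_sq
  calc v • RI θ + u • (Complex.I • RI θ - (Complex.I * u) • (1 : MIM 2 3))
      = (v + u * Complex.I) • RI θ - (u * (Complex.I * u)) • (1 : MIM 2 3) := by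
        rw [smul_sub, smul_smul, smul_smul, add_smul, add_sub_assoc]
    _ = (1 : MIM 2 3) := by rw [hc1, hc2]; simp
end

section
/- For every real θ, the operator R = R_III(θ) on V^{⊗3}, V = ℂ², is invertible and satisfies R + R^{−1} = √2·Id_{V^{⊗3}}; moreover the endomorphism Sp_{3,1}(R_III(θ)) − √2·Id_{V^{⊗2}} acts off-diagonally on the second (last) tensor factor, i.e., its matrix entry at ((j_1,j_2),(i_1,i_2)) vanishes whenever i_2 = j_2, and likewise Sp_{3,1}(R_III(θ)^{−1}) − √2·Id_{V^{⊗2}} has vanishing entries at all ((j_1,j_2),(i_1,i_2)) with i_2 = j_2. -/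
open scoped BigOperators
open Matrix

section Aux

lemma emb_inj : Function.Injective emb := embE.injective

lemma sqrtC_ne : (Real.sqrt 2 : ℂ) ≠ 0 := by
  simp only [ne_eq, Complex.ofReal_eq_zero]
  positivity

lemma sqrtC_sq : (Real.sqrt 2 : ℂ) * (Real.sqrt 2 : ℂ) = 2 := by
  rw [← Complex.ofReal_mul, Real.mul_self_sqrt (by norm_num)]
  norm_num

lemma RIII_sq (θ : ℝ) : RIII θ * RIII θ = (Real.sqrt 2 : ℂ) • RIII θ - 1 := by
  set c : ℂ := ((Real.sqrt 2 : ℂ))⁻¹ with hc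
  set A : Matrix (Fin 4) (Fin 4) ℂ :=
      !![1, 0, 1, 0;
         0, 1, 0, Complex.exp (θ * Complex.I);
         -1, 0, 1, 0;
         0, -Complex.exp (-θ * Complex.I), 0, 1] with hA'
  set D : Matrix (Fin 4) (Fin 4) ℂ :=
      !![1, 0, -Complex.exp (θ * Complex.I), 0;
         0, 1, 0, -Complex.exp (2 * θ * Complex.I);
         Complex.exp (-θ * Complex.I), 0, 1, 0;
         0, Complex.exp (-2 * θ * Complex.I), 0, 1] with hD'
  have hA : A * A = (2:ℂ) • A - (2:ℂ) • 1 := by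
    ext i j
    fin_cases i <;> fin_cases j <;>
      simp [hA', Matrix.mul_apply, Fin.sum_univ_four, Matrix.one_apply] <;>
      ring_nf <;> simp [← Complex.exp_add] <;> ring_nf
  have hD : D * D = (2:ℂ) • D - (2:ℂ) • 1 := by
    ext i j
    fin_cases i <;> fin_cases j <;>
      simp [hD', Matrix.mul_apply, Fin.sum_univ_four, Matrix.one_apply] <;>
      ring_nf <;> simp [← Complex.exp_add] <;> ring_nf
  set B : Matrix (Fin 4 ⊕ Fin 4) (Fin 4 ⊕ Fin 4) ℂ := Matrix.fromBlocks A 0 0 D with hB'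
  have hBB : B * B = (2:ℂ) • B - (2:ℂ) • 1 := by
    rw [hB', Matrix.fromBlocks_multiply, ← Matrix.fromBlocks_one]
    simp only [Matrix.mul_zero, Matrix.zero_mul, add_zero, zero_add, hA, hD]
    ext (i | i) (j | j) <;>
      simp [Matrix.fromBlocks, Matrix.sub_apply, Matrix.smul_apply]
  set Y : Matrix (Fin 8) (Fin 8) ℂ :=
      Matrix.reindex finSumFinEquiv finSumFinEquiv B with hY'
  have hYY : Y * Y = Matrix.reindex finSumFinEquiv finSumFinEquiv (B * B) := by
    simp [hY', Matrix.reindex_apply, Matrix.submatrix_mul_equiv]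
  have hXX : (c • Y) * (c • Y) = (Real.sqrt 2 : ℂ) • (c • Y) - 1 := by
    rw [smul_mul_smul_comm, hYY, hBB]
    have h1 : Matrix.reindex finSumFinEquiv finSumFinEquiv
        ((2:ℂ) • B - (2:ℂ) • (1 : Matrix (Fin 4 ⊕ Fin 4) (Fin 4 ⊕ Fin 4) ℂ)) =
        (2:ℂ) • Y - (2:ℂ) • 1 := by
      ext i j
      simp [hY', Matrix.reindex_apply, Matrix.submatrix_apply, Matrix.sub_apply,
        Matrix.smul_apply, Matrix.one_apply, EmbeddingLike.apply_eq_iff_eq]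
    rw [h1, smul_sub, smul_smul, smul_smul, smul_smul]
    have hcc : c * c * 2 = 1 := by
      rw [hc, ← mul_inv, sqrtC_sq]
      norm_num
    have hsc : (Real.sqrt 2 : ℂ) * c = 1 := by
      rw [hc, mul_inv_cancel₀ sqrtC_ne]
    rw [hcc, hsc, one_smul, one_smul]
  have key : ∀ M : Matrix (Fin 8) (Fin 8) ℂ,
      M * M = (Real.sqrt 2 : ℂ) • M - 1 → ofMat8 M * ofMat8 M =
        (Real.sqrt 2 : ℂ) • ofMat8 M - 1 := by
    intro M hM
    rw [ofMat8_mul, hM]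
    ext a b
    simp [ofMat8, Matrix.sub_apply, Matrix.smul_apply, Matrix.one_apply, emb_inj.eq_iff]
  exact key _ hXX

lemma RIII_mul_right (θ : ℝ) :
    RIII θ * ((Real.sqrt 2 : ℂ) • 1 - RIII θ) = 1 := by
  rw [mul_sub, mul_smul_comm, mul_one, RIII_sq, sub_sub_cancel]

lemma RIII_mul_left (θ : ℝ) :
    ((Real.sqrt 2 : ℂ) • 1 - RIII θ) * RIII θ = 1 := by
  rw [sub_mul, smul_mul_assoc, one_mul, RIII_sq, sub_sub_cancel]

lemma RIII_inv (θ : ℝ) : (RIII θ)⁻¹ = (Real.sqrt 2 : ℂ) • 1 - RIII θ :=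
  Matrix.inv_eq_right_inv (RIII_mul_right θ)

lemma pTr_two (f : MIM 2 3) (a b : Fin 2 → Fin 2) :
    pTr 2 1 f a b =
      f (Fin.append a fun _ : Fin 1 => (0 : Fin 2)) (Fin.append b fun _ : Fin 1 => (0 : Fin 2)) +
      f (Fin.append a fun _ : Fin 1 => (1 : Fin 2)) (Fin.append b fun _ : Fin 1 => (1 : Fin 2)) := by
  show (∑ l : Fin 1 → Fin 2, f (Fin.append a l) (Fin.append b l)) = _
  rw [Fintype.sum_equiv (Equiv.funUnique (Fin 1) (Fin 2))
      (fun l => f (Fin.append a l) (Fin.append b l))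
      (fun x => f (Fin.append a fun _ : Fin 1 => x) (Fin.append b fun _ : Fin 1 => x))
      (fun l => by
        have hl : (fun _ : Fin 1 => l (default : Fin 1)) = l := by
          funext i
          rw [Unique.eq_default i]
        simp only [Equiv.funUnique_apply, hl]),
    Fin.sum_univ_two]

lemma append_eq_append_iff (a b : Fin 2 → Fin 2) (l : Fin 1 → Fin 2) :
    Fin.append a l = Fin.append b l ↔ a = b := by
  constructor
  · intro h
    funext i
    have := congrFun h (Fin.castAdd 1 i)
    simpa [Fin.append_left] using this
  · rintro rfl; rfl

lemma RIII_diag (θ : ℝ) (x y l : Fin 2) :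
    RIII θ (Fin.append ![x, y] fun _ : Fin 1 => l) (Fin.append ![x, y] fun _ : Fin 1 => l) =
      ((Real.sqrt 2 : ℂ))⁻¹ * 1 := by
  fin_cases x <;> fin_cases y <;> fin_cases l <;> rfl

lemma RIII_off (θ : ℝ) (x y u l : Fin 2) (h : x ≠ u) :
    RIII θ (Fin.append ![x, y] fun _ : Fin 1 => l) (Fin.append ![u, y] fun _ : Fin 1 => l) =
      ((Real.sqrt 2 : ℂ))⁻¹ * 0 := by
  fin_cases x <;> fin_cases u <;> first
    | exact absurd rfl h
    | (fin_cases y <;> fin_cases l <;> rfl)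

lemma vec_ne (x u y : Fin 2) (h : x ≠ u) : (![x, y] : Fin 2 → Fin 2) ≠ ![u, y] := by
  intro h'
  exact h (by simpa using congrFun h' 0)

lemma ptr_part (θ : ℝ) : ∀ a b : Fin 2 → Fin 2, a 1 = b 1 →
    (pTr 2 1 (RIII θ) - (Real.sqrt 2 : ℂ) • (1 : MIM 2 2)) a b = 0 := by
  have key : ∀ x y u : Fin 2,
      (pTr 2 1 (RIII θ) - (Real.sqrt 2 : ℂ) • (1 : MIM 2 2)) ![x, y] ![u, y] = 0 := by
    intro x y u
    rw [Matrix.sub_apply, Matrix.smul_apply, pTr_two]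
    by_cases hxu : x = u
    · subst hxu
      rw [RIII_diag, RIII_diag, Matrix.one_apply_eq]
      have h2 := sqrtC_sq
      have hne := sqrtC_ne
      field_simp
      first
        | linear_combination h2
        | linear_combination 2 * h2
        | linear_combination -2 * h2
        | linear_combination -h2
    · rw [RIII_off θ x y u 0 hxu, RIII_off θ x y u 1 hxu,
        Matrix.one_apply_ne (vec_ne x u y hxu)]
      simp
  intro a b hab
  have ha : a = ![a 0, a 1] := by
    funext i; fin_cases i <;> rfl
  have hb : b = ![b 0, b 1] := by
    funext i; fin_cases i <;> rfl
  rw [ha, hb, ← hab]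
  exact key (a 0) (a 1) (b 0)

end Aux

theorem stmt18 (θ : ℝ) :
    IsUnit (RIII θ) ∧
    RIII θ + (RIII θ)⁻¹ = (Real.sqrt 2 : ℂ) • (1 : MIM 2 3) ∧
    (∀ a b : Fin 2 → Fin 2, a 1 = b 1 →
      (pTr 2 1 (RIII θ) - (Real.sqrt 2 : ℂ) • (1 : MIM 2 2)) a b = 0) ∧
    (∀ a b : Fin 2 → Fin 2, a 1 = b 1 →
      (pTr 2 1 ((RIII θ)⁻¹) - (Real.sqrt 2 : ℂ) • (1 : MIM 2 2)) a b = 0) := by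
  have hinv := RIII_inv θ
  refine ⟨⟨⟨RIII θ, (Real.sqrt 2 : ℂ) • 1 - RIII θ, RIII_mul_right θ, RIII_mul_left θ⟩, rfl⟩,
    ?_, ptr_part θ, ?_⟩
  · rw [hinv]; abel
  · intro a b hab
    have h3 : pTr 2 1 (RIII θ) a b = (Real.sqrt 2 : ℂ) * (1 : MIM 2 2) a b := by
      have := ptr_part θ a b hab
      simpa [Matrix.sub_apply, Matrix.smul_apply, sub_eq_zero] using this
    rw [pTr_two] at h3
    rw [hinv, Matrix.sub_apply, Matrix.smul_apply, pTr_two]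
    have hone : ∀ l : Fin 1 → Fin 2,
        ((1 : MIM 2 3)) (Fin.append a l) (Fin.append b l) = (1 : MIM 2 2) a b := by
      intro l
      simp [Matrix.one_apply, append_eq_append_iff]
    simp only [Matrix.sub_apply, Matrix.smul_apply, hone, smul_eq_mul]
    linear_combination -h3
end
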